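/- arXiv:2105.11247 — 5 statements merged into one kernel-verified Lean document; each statement's English description precedes it below -/
import Mathlib

section
/- If G is a finite subgroup of PGL(2,F) that fixes a point of P^1(F), and |G| is not divisible by the characteristic of F, then G is cyclic. -/
/-!
Lift each element of `G` to `GL₂(F)`; the fixed point `z = [v]` makes `v` an eigenvector,
`g v = λ v`. The ratio `λ² / det g = λ / μ` of the eigenvalue on `v` to the other eigenvalue
does not change when `g` is multiplied by a scalar, so it descends to a character `χ : G → Fˣ`.
If `χ σ = 1`, the lift of `σ` rescaled to fix `v` has both eigenvalues `1`, so it is `1 + N`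
with `N² = 0`; for `n` the order of `σ` its power `1 + n N` is scalar, and since `n` is
invertible in `F` this forces `N = 0`, i.e. `σ = 1`. Thus `χ` embeds `G` into `Fˣ`, and finite
subgroups of `Fˣ` are cyclic.
-/

open Matrix Polynomial
open scoped LinearAlgebra.Projectivization MatrixGroups Pointwise

namespace PaperPGL

section Defs

variable (F : Type*) [Field F]

lemma glInj (g : GL (Fin 2) F) :
    Function.Injective ((g : Matrix (Fin 2) (Fin 2) F).mulVecLin) := by
  intro x y h
  have h2 := congrArg ((↑g⁻¹ : Matrix (Fin 2) (Fin 2) F).mulVecLin) h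
  simp only [Matrix.mulVecLin_apply, Matrix.mulVec_mulVec] at h2
  rw [← Matrix.GeneralLinearGroup.coe_mul, inv_mul_cancel] at h2
  simpa using h2

noncomputable instance : MulAction (GL (Fin 2) F) (ℙ F (Fin 2 → F)) where
  smul g x := Projectivization.map ((g : Matrix (Fin 2) (Fin 2) F).mulVecLin) (glInj F g) x
  one_smul x := by
    show Projectivization.map _ _ x = x
    have h1 : ((1 : GL (Fin 2) F) : Matrix (Fin 2) (Fin 2) F).mulVecLin
        = (LinearMap.id : (Fin 2 → F) →ₗ[F] (Fin 2 → F)) := by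
      rw [Matrix.GeneralLinearGroup.coe_one, Matrix.mulVecLin_one]
    simp only [h1]
    rw [Projectivization.map_id]
    rfl
  mul_smul g h x := by
    show Projectivization.map _ _ x = Projectivization.map _ _ (Projectivization.map _ _ x)
    have h1 : ((g * h : GL (Fin 2) F) : Matrix (Fin 2) (Fin 2) F).mulVecLin
        = ((g : Matrix (Fin 2) (Fin 2) F).mulVecLin).comp
          ((h : Matrix (Fin 2) (Fin 2) F).mulVecLin) := by
      rw [← Matrix.mulVecLin_mul, ← Matrix.GeneralLinearGroup.coe_mul]
    simp only [h1]
    rw [Projectivization.map_comp]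
    rfl

/-- The image of `GL(2,F)` in the permutations of the projective line: `PGL(2,F)`
acting faithfully on `ℙ¹(F)`. -/
noncomputable def toPGL : GL (Fin 2) F →* Equiv.Perm (ℙ F (Fin 2 → F)) :=
  MulAction.toPermHom _ _

/-- `PGL(2,F)` as a subgroup of the permutation group of the projective line `ℙ¹(F)`. -/
noncomputable def pgl : Subgroup (Equiv.Perm (ℙ F (Fin 2 → F))) :=
  (toPGL F).range

/-- Entrywise base change `GL(2,F) →* GL(2,K)` along a ring hom. -/
noncomputable def baseChange (F K : Type*) [Field F] [Field K] (phi : F →+* K) :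
    GL (Fin 2) F →* GL (Fin 2) K :=
  Units.map phi.mapMatrix.toMonoidHom

end Defs

section UnipotentMatrices

lemma mul_self_eq_zero_of_trace_eq_zero_of_det_eq_zero {R : Type*} [CommRing R]
    {N : Matrix (Fin 2) (Fin 2) R} (htr : N.trace = 0) (hdet : N.det = 0) : N * N = 0 := by
  rw [Matrix.trace_fin_two] at htr
  rw [Matrix.det_fin_two] at hdet
  ext i j
  fin_cases i <;> fin_cases j <;>
    simp only [Fin.zero_eta, Fin.mk_one, Fin.isValue, Matrix.mul_apply, Fin.sum_univ_two,
      Matrix.zero_apply]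
  · linear_combination N 0 0 * htr - hdet
  · linear_combination N 0 1 * htr
  · linear_combination N 1 0 * htr
  · linear_combination N 1 1 * htr - hdet

lemma sub_one_mul_self_eq_zero {F : Type*} [Field F] {M : Matrix (Fin 2) (Fin 2) F}
    {v : Fin 2 → F} (hv : v ≠ 0) (hMv : M *ᵥ v = v) (hdet : M.det = 1) :
    (M - 1) * (M - 1) = 0 := by
  have hdet' : (M - 1).det = 0 := Matrix.exists_mulVec_eq_zero_iff.mp
    ⟨v, hv, by rw [Matrix.sub_mulVec, hMv, Matrix.one_mulVec, sub_self]⟩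
  refine mul_self_eq_zero_of_trace_eq_zero_of_det_eq_zero ?_ hdet'
  rw [Matrix.det_fin_two] at hdet hdet'
  simp only [Matrix.trace_fin_two, Matrix.sub_apply, Matrix.one_apply_eq,
    Matrix.one_apply_ne zero_ne_one, Matrix.one_apply_ne one_ne_zero] at hdet' ⊢
  linear_combination hdet - hdet'

lemma one_add_pow_of_mul_self_eq_zero {R : Type*} [Semiring R] {N : R} (hN : N * N = 0)
    (k : ℕ) : (1 + N) ^ k = 1 + k • N := by
  induction k with
  | zero => simp
  | succ k ih =>
    rw [pow_succ, ih, add_mul, one_mul, smul_mul_assoc, mul_add, mul_one, hN, add_zero,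
      succ_nsmul]
    abel

lemma eq_zero_of_one_add_pow_eq_algebraMap {K A : Type*} [Field K] [Ring A] [Algebra K A]
    [Nontrivial A] {N : A} (hN : N * N = 0) {n : ℕ} (hn : (n : K) ≠ 0) {c : K}
    (hpow : (1 + N) ^ n = algebraMap K A c) : N = 0 := by
  have hnN : (n : K) • N = algebraMap K A (c - 1) := by
    rw [map_sub, map_one, ← hpow, one_add_pow_of_mul_self_eq_zero hN, Nat.cast_smul_eq_nsmul,
      add_sub_cancel_left]
  have hc : c - 1 = 0 := by
    apply pow_eq_zero_iff two_ne_zero |>.mp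
    apply (algebraMap K A).injective
    rw [map_pow, map_zero, ← hnN, sq, smul_mul_smul_comm, hN, smul_zero]
  rw [hc, map_zero] at hnN
  exact (smul_eq_zero.mp hnN).resolve_left hn

end UnipotentMatrices

section ProjectiveLine

variable {F : Type*} [Field F]

lemma smul_mk (g : GL (Fin 2) F) {v : Fin 2 → F} (hv : v ≠ 0) :
    g • Projectivization.mk F v hv =
      Projectivization.mk F ((g : Matrix (Fin 2) (Fin 2) F) *ᵥ v)
        (fun h => hv (glInj F g (by simpa using h))) :=
  rfl

lemma toPGL_apply (g : GL (Fin 2) F) (x : ℙ F (Fin 2 → F)) : toPGL F g x = g • x :=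
  rfl

theorem ker_toPGL : (toPGL F).ker = Subgroup.center (GL (Fin 2) F) := by
  ext g
  rw [MonoidHom.mem_ker, Matrix.GeneralLinearGroup.mem_center_iff_val_mem_range_scalar]
  constructor
  · intro hg
    obtain ⟨a, ha⟩ := LinearMap.exists_eq_smul_id_of_forall_notLinearIndependent
      (f := (g : Matrix (Fin 2) (Fin 2) F).mulVecLin) fun v => by
        by_cases hv : v = 0
        · simp [hv, linearIndependent_fin2]
        · have hfix : g • Projectivization.mk F v hv = Projectivization.mk F v hv :=
            DFunLike.congr_fun hg (Projectivization.mk F v hv)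
          rw [smul_mk, Projectivization.mk_eq_mk_iff'] at hfix
          simpa [LinearIndependent.pair_iff' hv] using hfix
    refine ⟨a, ?_⟩
    apply Matrix.toLin'.injective
    rw [Matrix.toLin'_apply', Matrix.toLin'_apply', ha, Matrix.scalar_apply,
      ← Matrix.smul_one_eq_diagonal, ← Matrix.toLin'_apply', map_smul, Matrix.toLin'_one]
    rfl
  · rintro ⟨a, ha⟩
    refine Equiv.ext fun x => ?_
    induction x using Projectivization.ind with | h v hv =>
    rw [toPGL_apply, smul_mk, Equiv.Perm.one_apply, Projectivization.mk_eq_mk_iff']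
    exact ⟨a, by simp [← ha]⟩

end ProjectiveLine

section FixedLine

variable {F : Type*} [Field F] (z : ℙ F (Fin 2 → F))

local notation "Stab" => MulAction.stabilizer (GL (Fin 2) F) z

lemma exists_mulVec_rep_eq_smul {g : GL (Fin 2) F} (hg : g ∈ Stab) :
    ∃ a : Fˣ, (g : Matrix (Fin 2) (Fin 2) F) *ᵥ z.rep = a • z.rep := by
  have hfix : g • Projectivization.mk F z.rep z.rep_nonzero =
      Projectivization.mk F z.rep z.rep_nonzero := by
    rw [Projectivization.mk_rep]
    exact hg
  rw [smul_mk, Projectivization.mk_eq_mk_iff] at hfix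
  obtain ⟨a, ha⟩ := hfix
  exact ⟨a, ha.symm⟩

lemma units_smul_rep_injective : Function.Injective fun a : Fˣ => a • z.rep :=
  fun _ _ h => Units.ext (smul_left_injective F z.rep_nonzero h)

noncomputable def lineEigenvalue : Stab →* Fˣ :=
  MonoidHom.mk' (fun g => (exists_mulVec_rep_eq_smul z g.2).choose) fun g h => by
    have spec (k : Stab) := (exists_mulVec_rep_eq_smul z k.2).choose_spec
    apply units_smul_rep_injective z
    change _ • z.rep = _ • z.rep
    rw [← spec (g * h), mul_comm, mul_smul, ← spec g, ← Matrix.mulVec_smul, ← spec h,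
      Matrix.mulVec_mulVec]
    rfl

lemma mulVec_rep_eq_lineEigenvalue_smul (g : Stab) :
    ((g : GL (Fin 2) F) : Matrix (Fin 2) (Fin 2) F) *ᵥ z.rep = lineEigenvalue z g • z.rep :=
  (exists_mulVec_rep_eq_smul z g.2).choose_spec

noncomputable def fixedLineCharacter : Stab →* Fˣ :=
  lineEigenvalue z ^ 2 * (Matrix.GeneralLinearGroup.det.comp (Stab).subtype)⁻¹

lemma fixedLineCharacter_eq_one_of_mem_center {g : Stab}
    (hg : (g : GL (Fin 2) F) ∈ Subgroup.center (GL (Fin 2) F)) : fixedLineCharacter z g = 1 := by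
  rw [Matrix.GeneralLinearGroup.center_eq_range_scalar] at hg
  obtain ⟨u, hu⟩ := hg
  have hval : lineEigenvalue z g = u := by
    apply units_smul_rep_injective z
    change _ • z.rep = _ • z.rep
    rw [← mulVec_rep_eq_lineEigenvalue_smul, ← hu]
    simp [Units.smul_def]
  simp [fixedLineCharacter, hval, ← hu, Matrix.GeneralLinearGroup.det_scalar]

lemma toPGL_eq_one_of_fixedLineCharacter_eq_one {g : Stab} (hχ : fixedLineCharacter z g = 1)
    {n : ℕ} (hn : (n : F) ≠ 0) (hpow : toPGL F g ^ n = 1) : toPGL F g = 1 := by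
  set a := lineEigenvalue z g
  set h : GL (Fin 2) F := Matrix.GeneralLinearGroup.scalar (Fin 2) a⁻¹ * g with h_def
  have hh : toPGL F h = toPGL F g := by
    have hscalar : toPGL F (Matrix.GeneralLinearGroup.scalar (Fin 2) a⁻¹) = 1 :=
      ker_toPGL.ge (by rw [Matrix.GeneralLinearGroup.center_eq_range_scalar]; exact ⟨a⁻¹, rfl⟩)
    rw [h_def, map_mul, hscalar, one_mul]
  have hfix : (h : Matrix (Fin 2) (Fin 2) F) *ᵥ z.rep = z.rep := by
    rw [h_def, Units.val_mul, ← Matrix.mulVec_mulVec, mulVec_rep_eq_lineEigenvalue_smul,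
      Matrix.GeneralLinearGroup.coe_scalar, Matrix.scalar_apply, ← Matrix.smul_one_eq_diagonal,
      Matrix.smul_mulVec, Matrix.one_mulVec, Units.smul_def, smul_smul, Units.inv_mul, one_smul]
  have hdet : (h : Matrix (Fin 2) (Fin 2) F).det = 1 := by
    have hdetg : Matrix.GeneralLinearGroup.det (g : GL (Fin 2) F) = a ^ 2 :=
      (mul_inv_eq_one.mp hχ).symm
    rw [← Matrix.GeneralLinearGroup.val_det_apply, h_def, map_mul, hdetg,
      Matrix.GeneralLinearGroup.det_scalar, Fintype.card_fin, ← mul_pow, inv_mul_cancel,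
      one_pow, Units.val_one]
  have hcenter : h ^ n ∈ Subgroup.center (GL (Fin 2) F) :=
    ker_toPGL.le (by rw [MonoidHom.mem_ker, map_pow, hh, hpow])
  obtain ⟨c, hc⟩ := Matrix.GeneralLinearGroup.mem_center_iff_val_mem_range_scalar.mp hcenter
  have hunip : (h : Matrix (Fin 2) (Fin 2) F) - 1 = 0 := by
    refine eq_zero_of_one_add_pow_eq_algebraMap
      (sub_one_mul_self_eq_zero z.rep_nonzero hfix hdet) hn (c := c) ?_
    rw [add_sub_cancel, ← Units.val_pow_eq_pow_val, ← hc]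
    rfl
  have h_one : h = 1 := Units.ext (sub_eq_zero.mp hunip)
  rw [← hh, h_one, map_one]

noncomputable def pglFixedLineCharacter : ((toPGL F).domRestrict Stab).range →* Fˣ :=
  ((toPGL F).domRestrict Stab).rangeRestrict.liftOfSurjective
    (MonoidHom.rangeRestrict_surjective _)
    ⟨fixedLineCharacter z, fun g hg => fixedLineCharacter_eq_one_of_mem_center z <| by
      rwa [MonoidHom.ker_rangeRestrict, MonoidHom.ker_domRestrict, Subgroup.mem_subgroupOf,
        ker_toPGL] at hg⟩

lemma pglFixedLineCharacter_rangeRestrict (g : Stab) :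
    pglFixedLineCharacter z (((toPGL F).domRestrict Stab).rangeRestrict g) =
      fixedLineCharacter z g :=
  MonoidHom.liftOfRightInverse_comp_apply _ _ _ _ g

lemma eq_one_of_pglFixedLineCharacter_eq_one {τ : ((toPGL F).domRestrict Stab).range}
    (hχ : pglFixedLineCharacter z τ = 1) {n : ℕ} (hn : (n : F) ≠ 0) (hpow : τ ^ n = 1) :
    τ = 1 := by
  obtain ⟨g, rfl⟩ := MonoidHom.rangeRestrict_surjective _ τ
  rw [pglFixedLineCharacter_rangeRestrict] at hχ
  exact Subtype.ext
    (toPGL_eq_one_of_fixedLineCharacter_eq_one z hχ hn (congrArg Subtype.val hpow))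

lemma le_range_domRestrict_stabilizer {G : Subgroup (Equiv.Perm (ℙ F (Fin 2 → F)))}
    (hG : G ≤ pgl F) (hz : ∀ σ ∈ G, σ z = z) : G ≤ ((toPGL F).domRestrict Stab).range := by
  intro σ hσ
  obtain ⟨g, rfl⟩ := hG hσ
  exact ⟨⟨g, hz _ hσ⟩, rfl⟩

end FixedLine

/-- A finite subgroup of `PGL(2,F)` fixing a point of `ℙ¹(F)`, of order not divisible by
the characteristic of `F`, is cyclic. -/
theorem stmt1 (F : Type*) [Field F]
    (G : Subgroup (Equiv.Perm (ℙ F (Fin 2 → F)))) (hG : G ≤ pgl F) (hfin : Finite G)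
    (hfix : ∃ z : ℙ F (Fin 2 → F), ∀ σ ∈ G, σ z = z)
    (hchar : ¬ (ringChar F ∣ Nat.card G)) :
    IsCyclic G := by
  obtain ⟨z, hz⟩ := hfix
  have hGH := le_range_domRestrict_stabilizer z hG hz
  let χ : G →* Fˣ := (pglFixedLineCharacter z).comp (Subgroup.inclusion hGH)
  refine isCyclic_of_injective_ringHom ((Units.coeHom F).comp χ) (Units.val_injective.comp ?_)
  refine (injective_iff_map_eq_one χ).mpr fun σ hσ => Subgroup.inclusion_injective hGH ?_
  have hn : (orderOf σ : F) ≠ 0 := fun h =>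
    hchar (((ringChar.spec F _).mp h).trans (orderOf_dvd_natCard σ))
  exact eq_one_of_pglFixedLineCharacter_eq_one z hσ hn
    (by rw [← map_pow, pow_orderOf_eq_one, map_one])

end PaperPGL
end

section
/- A finite subgroup G of PGL(2,F), F algebraically closed, has at most three non-regular orbits in its action on P^1(F). -/
/-!
A nontrivial element of `PGL(2,F)` fixes at most two points of `ℙ¹(F)`: a representing matrix
fixing three distinct points has three pairwise independent eigenvectors in `F²`, so it is
scalar. Count the pairs `(g, y)` with `g ≠ 1`, `g • y = y` and `y` in a union of non-regular
orbits. A non-regular orbit `O` contributes `∑_{y ∈ O} (|G_y| - 1) = |G| - |O| ≥ |G| / 2`, and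
each of the `|G| - 1` nontrivial elements contributes at most `2`; so four non-regular orbits
would give `2 |G| ≤ 2 (|G| - 1)`.
-/

open Matrix Polynomial
open scoped LinearAlgebra.Projectivization MatrixGroups Pointwise

theorem Set.sum_ncard_inter_le_of_pairwiseDisjoint {α : Type*} {s : Set α} {k : ℕ}
    (hs : s.encard ≤ k) (T : Finset (Set α)) (hT : (T : Set (Set α)).PairwiseDisjoint id) :
    ∑ t ∈ T, (s ∩ t).ncard ≤ k := by
  obtain ⟨hfin, hk⟩ := Set.encard_le_coe_iff_finite_ncard_le.1 hs
  have hpieces : (T : Set (Set α)).PairwiseDisjoint (s ∩ ·) := fun t ht t' ht' hne =>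
    (hT ht ht' hne).mono Set.inter_subset_right Set.inter_subset_right
  calc ∑ t ∈ T, (s ∩ t).ncard = (⋃ t ∈ (T : Set (Set α)), s ∩ t).ncard := by
        rw [T.finite_toSet.ncard_biUnion (fun t _ => hfin.inter_of_left t) hpieces,
          finsum_mem_coe_finset]
    _ ≤ s.ncard := Set.ncard_le_ncard (Set.iUnion₂_subset fun _ _ => Set.inter_subset_left) hfin
    _ ≤ k := hk

namespace MulAction

open Finset

variable {G X : Type*} [Group G] [MulAction G X]

theorem two_mul_ncard_orbit_le_card [Finite G] {x : X} (hx : stabilizer G x ≠ ⊥) :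
    2 * (orbit G x).ncard ≤ Nat.card G := by
  rw [← index_stabilizer, ← (stabilizer G x).card_mul_index]
  exact Nat.mul_le_mul_right _ ((Subgroup.one_lt_card_iff_ne_bot _).2 hx)

theorem sum_ncard_fixedBy_inter_orbit [Fintype G] (x : X) :
    ∑ g : G, (fixedBy X g ∩ orbit G x).ncard = Fintype.card G := by
  classical
  have hO : (orbit G x).Finite := Set.finite_range _
  calc ∑ g : G, (fixedBy X g ∩ orbit G x).ncard
      = ∑ g : G, ∑ y ∈ hO.toFinset, if g • y = y then 1 else 0 := by
        refine sum_congr rfl fun g _ => ?_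
        rw [← card_filter, ← Set.ncard_coe_finset]
        congr 1
        ext y
        simp [and_comm]
    _ = ∑ y ∈ hO.toFinset, Nat.card (stabilizer G y) := by
        rw [sum_comm]
        refine sum_congr rfl fun y _ => ?_
        rw [← card_filter, Nat.card_eq_fintype_card, Fintype.card_subtype]
        rfl
    _ = ∑ y ∈ hO.toFinset, Nat.card (stabilizer G x) := by
        refine sum_congr rfl fun y hy => ?_
        exact Nat.card_congr (stabilizerEquivStabilizerOfOrbitRel (hO.mem_toFinset.1 hy)).toEquiv
    _ = Fintype.card G := by
        rw [sum_const, smul_eq_mul, ← Set.ncard_eq_toFinset_card _ hO, ← index_stabilizer,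
          Subgroup.index_mul_card, Nat.card_eq_fintype_card]

theorem card_le_two_mul_sum_ncard_fixedBy_inter_orbit [Fintype G] [DecidableEq G] {x : X}
    (hx : stabilizer G x ≠ ⊥) :
    Fintype.card G ≤
      2 * ∑ g ∈ (univ : Finset G).erase 1, (fixedBy X g ∩ orbit G x).ncard := by
  have hsum := sum_ncard_fixedBy_inter_orbit (G := G) x
  rw [← add_sum_erase _ _ (mem_univ 1), fixedBy_one_eq_univ, Set.univ_inter] at hsum
  have horbit := two_mul_ncard_orbit_le_card hx
  rw [Nat.card_eq_fintype_card] at horbit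
  omega

theorem card_nonregular_orbits_le [Fintype G] {k : ℕ}
    (hfix : ∀ g : G, g ≠ 1 → (fixedBy X g).encard ≤ k) (S : Finset (Set X))
    (hS : ∀ O ∈ S, ∃ x, orbit G x = O ∧ stabilizer G x ≠ ⊥) :
    S.card ≤ 2 * k - 1 := by
  classical
  have hdisj : (S : Set (Set X)).PairwiseDisjoint id := by
    intro O hO O' hO' hne
    obtain ⟨x, rfl, -⟩ := hS O hO
    obtain ⟨y, rfl, -⟩ := hS O' hO'
    exact (orbit.eq_or_disjoint x y).resolve_left hne
  have hcount : S.card * Fintype.card G ≤ 2 * (k * (Fintype.card G - 1)) := calc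
    S.card * Fintype.card G = ∑ _O ∈ S, Fintype.card G := by rw [sum_const, smul_eq_mul]
    _ ≤ ∑ O ∈ S, 2 * ∑ g ∈ (univ : Finset G).erase 1, (fixedBy X g ∩ O).ncard :=
        sum_le_sum fun O hO => by
          obtain ⟨x, rfl, hx⟩ := hS O hO
          exact card_le_two_mul_sum_ncard_fixedBy_inter_orbit hx
    _ = 2 * ∑ g ∈ (univ : Finset G).erase 1, ∑ O ∈ S, (fixedBy X g ∩ O).ncard := by
        rw [← mul_sum, sum_comm]
    _ ≤ 2 * ∑ _g ∈ (univ : Finset G).erase 1, k := by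
        gcongr with g hg
        exact Set.sum_ncard_inter_le_of_pairwiseDisjoint (hfix g (ne_of_mem_erase hg)) S hdisj
    _ = 2 * (k * (Fintype.card G - 1)) := by
        rw [sum_const, card_erase_of_mem (mem_univ _), card_univ, smul_eq_mul, mul_comm k]
  obtain ⟨m, hm⟩ := Nat.exists_eq_add_one_of_ne_zero (Fintype.card_ne_zero (α := G))
  rw [hm, Nat.add_sub_cancel] at hcount
  by_contra! hk
  nlinarith [Nat.mul_le_mul_right m (show 2 * k ≤ S.card by omega)]

theorem exists_three_orbits_of_encard_fixedBy_le_two [Finite G] [Nonempty X]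
    (hfix : ∀ g : G, g ≠ 1 → (fixedBy X g).encard ≤ 2) :
    ∃ z₁ z₂ z₃ : X, ∀ z, stabilizer G z ≠ ⊥ →
      orbit G z = orbit G z₁ ∨ orbit G z = orbit G z₂ ∨ orbit G z = orbit G z₃ := by
  classical
  have := Fintype.ofFinite G
  by_contra! h
  obtain ⟨p⟩ := ‹Nonempty X›
  obtain ⟨x₁, hx₁, -⟩ := h p p p
  obtain ⟨x₂, hx₂, h₂₁, -⟩ := h x₁ x₁ x₁
  obtain ⟨x₃, hx₃, h₃₁, h₃₂, -⟩ := h x₁ x₂ x₂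
  obtain ⟨x₄, hx₄, h₄₁, h₄₂, h₄₃⟩ := h x₁ x₂ x₃
  have := card_nonregular_orbits_le (k := 2) hfix
    {orbit G x₁, orbit G x₂, orbit G x₃, orbit G x₄} (by
      simp only [mem_insert, mem_singleton]
      rintro O (rfl | rfl | rfl | rfl) <;> exact ⟨_, rfl, ‹_›⟩)
  rw [card_insert_of_notMem (by simp [*, Ne.symm]),
    card_insert_of_notMem (by simp [*, Ne.symm]), card_pair (Ne.symm h₄₃)] at this
  omega

end MulAction

namespace Projectivization

variable {K V : Type*} [Field K] [AddCommGroup V] [Module K V]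

theorem map_eq_self_iff {f : V →ₗ[K] V} (hf : Function.Injective f) (x : ℙ K V) :
    map f hf x = x ↔ ∃ a : K, f x.rep = a • x.rep := by
  conv_lhs => rw [← x.mk_rep]
  rw [map_mk, mk_eq_mk_iff']
  exact exists_congr fun _ => eq_comm

theorem eq_of_rep_eq_smul {x y : ℙ K V} {a : K} (h : x.rep = a • y.rep) : x = y := by
  rw [← x.mk_rep, ← y.mk_rep, mk_eq_mk_iff']
  exact ⟨a, h.symm⟩

theorem map_eq_id_of_three_fixed (hV : Module.finrank K V = 2) {f : V →ₗ[K] V}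
    (hf : Function.Injective f) {a b c : ℙ K V} (hab : a ≠ b) (hac : a ≠ c) (hbc : b ≠ c)
    (ha : map f hf a = a) (hb : map f hf b = b) (hc : map f hf c = c) : map f hf = id := by
  obtain ⟨α, hα⟩ := (map_eq_self_iff hf a).1 ha
  obtain ⟨β, hβ⟩ := (map_eq_self_iff hf b).1 hb
  obtain ⟨γ, hγ⟩ := (map_eq_self_iff hf c).1 hc
  have hli : LinearIndependent K ![a.rep, b.rep] := linearIndependent_pair_iff_ne.2 hab
  have hspan : Submodule.span K {a.rep, b.rep} = ⊤ := by
    rw [← range_cons_cons_empty _ _ ![]]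
    exact hli.span_eq_top_of_card_eq_finrank (by simp [hV])
  obtain ⟨p, q, hpq⟩ := Submodule.mem_span_pair.1 (hspan ▸ Submodule.mem_top (x := c.rep))
  have hp : p ≠ 0 := by
    rintro rfl
    exact hbc (eq_of_rep_eq_smul (by simpa using hpq.symm)).symm
  have hq : q ≠ 0 := by
    rintro rfl
    exact hac (eq_of_rep_eq_smul (by simpa using hpq.symm)).symm
  have hcoeff : (p * α) • a.rep + (q * β) • b.rep = (p * γ) • a.rep + (q * γ) • b.rep :=
    calc _ = f c.rep := by rw [← hpq, map_add, map_smul, map_smul, hα, hβ, smul_smul, smul_smul]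
      _ = _ := by rw [hγ, ← hpq, smul_add, smul_smul, smul_smul, mul_comm γ, mul_comm γ]
  obtain ⟨hαγ, hβγ⟩ := hli.eq_of_pair hcoeff
  have hf_smul : f = γ • LinearMap.id := by
    refine LinearMap.ext_on hspan ?_
    rintro _ (rfl | rfl)
    · simp [hα, mul_left_cancel₀ hp hαγ]
    · simp [hβ, mul_left_cancel₀ hq hβγ]
  funext x
  exact (map_eq_self_iff hf x).2 ⟨γ, by rw [hf_smul]; rfl⟩

end Projectivization

namespace PaperPGL

theorem encard_fixedBy_le_two {F : Type*} [Field F] {σ : Equiv.Perm (ℙ F (Fin 2 → F))}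
    (hσ : σ ∈ pgl F) (hne : σ ≠ 1) : (MulAction.fixedBy (ℙ F (Fin 2 → F)) σ).encard ≤ 2 := by
  obtain ⟨g, rfl⟩ := hσ
  by_contra! h
  obtain ⟨t, hts, ht⟩ := Set.exists_subset_encard_eq (Order.add_one_le_of_lt h)
  obtain ⟨a, b, c, hab, hac, hbc, rfl⟩ := Set.encard_eq_three.1 ht
  have hid := Projectivization.map_eq_id_of_three_fixed (by simp) (glInj F g) hab hac hbc
    (hts (by simp)) (hts (by simp)) (hts (by simp))
  exact hne (Equiv.ext (congrFun hid))

theorem stmt3_general (F : Type*) [Field F]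
    (G : Subgroup (Equiv.Perm (ℙ F (Fin 2 → F)))) (hG : G ≤ pgl F) (hfin : Finite G) :
    ∃ z₁ z₂ z₃ : ℙ F (Fin 2 → F), ∀ z : ℙ F (Fin 2 → F),
      MulAction.stabilizer G z ≠ ⊥ →
      MulAction.orbit G z = MulAction.orbit G z₁ ∨
      MulAction.orbit G z = MulAction.orbit G z₂ ∨
      MulAction.orbit G z = MulAction.orbit G z₃ :=
  MulAction.exists_three_orbits_of_encard_fixedBy_le_two fun g hg =>
    encard_fixedBy_le_two (hG g.2) (by simpa using hg)

/-- A finite subgroup of `PGL(2,F)`, `F` algebraically closed, has at most three non-regular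
orbits on `ℙ¹(F)` (an orbit is non-regular iff the stabilizer of a point in it is
nontrivial). -/
theorem stmt3 (F : Type*) [Field F] [IsAlgClosed F]
    (G : Subgroup (Equiv.Perm (ℙ F (Fin 2 → F)))) (hG : G ≤ pgl F) (hfin : Finite G) :
    ∃ z₁ z₂ z₃ : ℙ F (Fin 2 → F), ∀ z : ℙ F (Fin 2 → F),
      MulAction.stabilizer G z ≠ ⊥ →
      MulAction.orbit G z = MulAction.orbit G z₁ ∨
      MulAction.orbit G z = MulAction.orbit G z₂ ∨
      MulAction.orbit G z = MulAction.orbit G z₃ :=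
  stmt3_general F G hG hfin

end PaperPGL
end

section
/- Let G be a finite subgroup of PGL(2, \bar{F}_q) with p dividing |G|, and Q a Sylow p-subgroup of G. Then the centralizer in G of any non-identity element of Q equals Q, and any two distinct Sylow p-subgroups of G intersect trivially. -/
open Matrix Polynomial
open scoped LinearAlgebra.Projectivization MatrixGroups Pointwise

namespace PaperPGL

section Aux

variable {K : Type*} [Field K]

lemma mulVec_ne_zero (g : GL (Fin 2) K) {v : Fin 2 → K} (hv : v ≠ 0) :
    (g : Matrix (Fin 2) (Fin 2) K).mulVec v ≠ 0 := by
  intro h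
  apply hv
  apply glInj K g
  simp [Matrix.mulVecLin_apply, h]

lemma smul_mk_s5 (g : GL (Fin 2) K) (v : Fin 2 → K) (hv : v ≠ 0) :
    g • Projectivization.mk K v hv
      = Projectivization.mk K ((g : Matrix (Fin 2) (Fin 2) K).mulVec v) (mulVec_ne_zero g hv) := by
  show Projectivization.map _ (glInj K g) _ = _
  rw [Projectivization.map_mk]
  rfl

lemma toPGL_apply_mk (g : GL (Fin 2) K) (v : Fin 2 → K) (hv : v ≠ 0) :
    toPGL K g (Projectivization.mk K v hv)
      = Projectivization.mk K ((g : Matrix (Fin 2) (Fin 2) K).mulVec v) (mulVec_ne_zero g hv) :=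
  smul_mk_s5 g v hv

end Aux


section Ker

variable {K : Type*} [Field K]

lemma toPGL_eq_one_iff (g : GL (Fin 2) K) :
    toPGL K g = 1 ↔ ∃ c : Kˣ, (g : Matrix (Fin 2) (Fin 2) K) = (c : K) • 1 := by
  constructor
  · intro h
    have hv : ∀ (v : Fin 2 → K) (hv : v ≠ 0), ∃ a : Kˣ,
        a • v = (g : Matrix (Fin 2) (Fin 2) K).mulVec v := by
      intro v hv
      have := congrFun (congrArg (fun e => e.toFun) h) (Projectivization.mk K v hv)
      simp only [Equiv.toFun_as_coe] at this
      rw [toPGL_apply_mk] at this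
      rw [Equiv.Perm.coe_one, id_eq] at this
      rw [Projectivization.mk_eq_mk_iff] at this
      exact this
    have h10 : (![1,0] : Fin 2 → K) ≠ 0 := by
      intro h; have := congrFun h 0; simp at this
    have h01 : (![0,1] : Fin 2 → K) ≠ 0 := by
      intro h; have := congrFun h 1; simp at this
    have h11 : (![1,1] : Fin 2 → K) ≠ 0 := by
      intro h; have := congrFun h 0; simp at this
    obtain ⟨a, ha⟩ := hv ![1,0] h10
    obtain ⟨b, hb⟩ := hv ![0,1] h01
    obtain ⟨c, hc⟩ := hv ![1,1] h11
    have ha0 := congrFun ha 0; have ha1 := congrFun ha 1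
    have hb0 := congrFun hb 0; have hb1 := congrFun hb 1
    have hc0 := congrFun hc 0; have hc1 := congrFun hc 1
    simp [Matrix.mulVec, dotProduct, Fin.sum_univ_two] at ha0 ha1 hb0 hb1 hc0 hc1
    simp only [Units.smul_def, smul_eq_mul, mul_one] at ha0 ha1 hb0 hb1 hc0 hc1
    refine ⟨c, ?_⟩
    ext i j
    fin_cases i <;> fin_cases j <;> simp [Matrix.one_apply]
    · linear_combination -hc0 + hb0
    · linear_combination -hb0
    · linear_combination -ha1
    · linear_combination -hc1 + ha1
  · rintro ⟨c, hc⟩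
    ext x
    induction x using Projectivization.ind with
    | h v hv =>
      rw [toPGL_apply_mk, Equiv.Perm.coe_one, id_eq, Projectivization.mk_eq_mk_iff]
      exact ⟨c, by rw [hc, Matrix.smul_mulVec, Matrix.one_mulVec, Units.smul_def]⟩

end Ker

section Aux2

variable {K : Type*} [Field K]

lemma toPGL_eq_iff (g h : GL (Fin 2) K) :
    toPGL K g = toPGL K h ↔
      ∃ c : Kˣ, (g : Matrix (Fin 2) (Fin 2) K) = (c : K) • (h : Matrix (Fin 2) (Fin 2) K) := by
  rw [← mul_inv_eq_one (a := toPGL K g), ← _root_.map_inv, ← _root_.map_mul, toPGL_eq_one_iff]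
  constructor
  · rintro ⟨c, hc⟩
    refine ⟨c, ?_⟩
    calc (↑g : Matrix (Fin 2) (Fin 2) K) = ↑(g * h⁻¹ * h) := by rw [inv_mul_cancel_right]
    _ = ↑(g * h⁻¹) * (h : Matrix (Fin 2) (Fin 2) K) := Units.val_mul _ _
    _ = ((c : K) • 1) * (h : Matrix (Fin 2) (Fin 2) K) := by rw [hc]
    _ = (c : K) • (h : Matrix (Fin 2) (Fin 2) K) := by rw [Matrix.smul_mul, one_mul]
  · rintro ⟨c, hc⟩
    refine ⟨c, ?_⟩
    calc (↑(g * h⁻¹) : Matrix (Fin 2) (Fin 2) K) = ↑g * ↑(h⁻¹) := Units.val_mul _ _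
    _ = ((c : K) • ↑h) * (↑(h⁻¹) : Matrix (Fin 2) (Fin 2) K) := by rw [hc]
    _ = (c : K) • ((h : Matrix (Fin 2) (Fin 2) K) * ↑(h⁻¹)) := by rw [Matrix.smul_mul]
    _ = (c : K) • 1 := by rw [Units.mul_inv]

lemma sq_zero {N : Matrix (Fin 2) (Fin 2) K} (h : IsNilpotent N) : N * N = 0 := by
  have h1 := (Matrix.isNilpotent_charpoly_sub_pow_of_isNilpotent h).eq_zero
  have h2 : N.charpoly = X ^ 2 := by
    rw [← sub_eq_zero]; simpa using h1
  have h3 := N.aeval_self_charpoly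
  rw [h2] at h3; simpa [pow_two] using h3

end Aux2


section Aux3

variable {K : Type*} [Field K]

noncomputable def Ugl (K : Type*) [Field K] : GL (Fin 2) K :=
  Matrix.GeneralLinearGroup.mkOfDetNeZero !![1,1;0,1] (by simp [Matrix.det_fin_two_of])

lemma coe_Ugl : (Ugl K : Matrix (Fin 2) (Fin 2) K) = !![1,1;0,1] := rfl

lemma Emat_sq : (!![0,1;0,0] : Matrix (Fin 2) (Fin 2) K) * !![0,1;0,0] = 0 := by
  ext i j
  fin_cases i <;> fin_cases j <;> simp [Matrix.mul_apply, Fin.sum_univ_two]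

lemma Ugl_eq : (Ugl K : Matrix (Fin 2) (Fin 2) K) = 1 + !![0,1;0,0] := by
  rw [coe_Ugl]
  ext i j
  fin_cases i <;> fin_cases j <;> simp [Matrix.one_apply]

lemma cent_aux {H : Matrix (Fin 2) (Fin 2) K} {cc : K} (hdet : H.det ≠ 0)
    (hrel : !![1,1;0,1] * H = cc • (H * !![(1:K),1;0,1])) :
    ∃ a b : K, a ≠ 0 ∧ H = a • 1 + b • !![(0:K),1;0,0] := by
  have he := Matrix.ext_iff.2 hrel
  have e00 := he 0 0
  have e01 := he 0 1
  have e10 := he 1 0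
  have e11 := he 1 1
  simp [Matrix.mul_apply, Fin.sum_univ_two] at e00 e01 e10 e11
  have hd : H.det = H 0 0 * H 1 1 - H 0 1 * H 1 0 := Matrix.det_fin_two H
  have h10 : H 1 0 = 0 := by
    by_contra hne
    have hz : (cc - 1) * H 1 0 = 0 := by linear_combination -e10
    rcases mul_eq_zero.1 hz with h | h
    · have hcc : cc = 1 := by linear_combination h
      rw [hcc, one_mul] at e00
      exact hne (by linear_combination e00)
    · exact hne h
  rw [h10] at e00 e11 hd
  have h00 : H 0 0 ≠ 0 := fun h => hdet (by rw [hd, h]; ring)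
  have hcc : cc = 1 := by
    have hz : H 0 0 * (cc - 1) = 0 := by linear_combination -e00
    rcases mul_eq_zero.1 hz with h | h
    · exact absurd h h00
    · linear_combination h
  rw [hcc, one_mul] at e01
  have hda : H 1 1 = H 0 0 := by linear_combination e01
  refine ⟨H 0 0, H 0 1, h00, ?_⟩
  ext i j
  fin_cases i <;> fin_cases j <;> simp [Matrix.one_apply, h10, hda]

lemma conj_nilp {N : Matrix (Fin 2) (Fin 2) K} (hN0 : N ≠ 0) (hN2 : N * N = 0) :
    ∃ P : GL (Fin 2) K, N * (P : Matrix (Fin 2) (Fin 2) K)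
      = (P : Matrix (Fin 2) (Fin 2) K) * !![0,1;0,0] := by
  obtain ⟨i, j, hij⟩ : ∃ i j, N i j ≠ 0 := by
    by_contra hc
    push_neg at hc
    exact hN0 (by ext i j; simpa using hc i j)
  set v : Fin 2 → K := Pi.single j 1 with hv
  set u : Fin 2 → K := N.mulVec v with hu
  have hui : u i = N i j := by
    simp [hu, hv, Matrix.mulVec, dotProduct]
  have hu0 : u ≠ 0 := fun h => hij (by rw [← hui, h, Pi.zero_apply])
  have hNu : N.mulVec u = 0 := by
    rw [hu, Matrix.mulVec_mulVec, hN2, Matrix.zero_mulVec]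
  set P : Matrix (Fin 2) (Fin 2) K := !![u 0, v 0; u 1, v 1] with hP
  have hdet : P.det ≠ 0 := by
    rw [hP, Matrix.det_fin_two_of]
    intro hzero
    have hdep : ∃ t : K, v = t • u := by
      rcases eq_or_ne (u 0) 0 with h0 | h0
      · have h1 : u 1 ≠ 0 := by
          intro h1
          exact hu0 (by ext k; fin_cases k <;> simp [h0, h1])
        refine ⟨v 1 / u 1, ?_⟩
        ext k
        fin_cases k <;> simp [Pi.smul_apply, smul_eq_mul]
        · field_simp
          linear_combination -hzero
        · field_simp
      · refine ⟨v 0 / u 0, ?_⟩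
        ext k
        fin_cases k <;> simp [Pi.smul_apply, smul_eq_mul]
        · field_simp
        · field_simp
          linear_combination hzero
    obtain ⟨t, ht⟩ := hdep
    apply hu0
    rw [hu, ht, Matrix.mulVec_smul, hNu, smul_zero]
  refine ⟨Matrix.GeneralLinearGroup.mkOfDetNeZero P hdet, ?_⟩
  have hcoe : ((Matrix.GeneralLinearGroup.mkOfDetNeZero P hdet : GL (Fin 2) K)
      : Matrix (Fin 2) (Fin 2) K) = P := rfl
  rw [hcoe]
  have hPE : P * !![0,1;0,0] = !![0, u 0; 0, u 1] := by
    ext k l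
    fin_cases k <;> fin_cases l <;> simp [hP, Matrix.mul_apply, Fin.sum_univ_two]
  have hNP : N * P = !![0, u 0; 0, u 1] := by
    ext k l
    fin_cases k <;> fin_cases l <;> simp [hP, Matrix.mul_apply, Fin.sum_univ_two]
    · simpa [Matrix.mulVec, dotProduct, Fin.sum_univ_two] using congrFun hNu 0
    · simpa [hu, Matrix.mulVec, dotProduct, Fin.sum_univ_two] using (congrFun hu 0).symm
    · simpa [Matrix.mulVec, dotProduct, Fin.sum_univ_two] using congrFun hNu 1
    · simpa [hu, Matrix.mulVec, dotProduct, Fin.sum_univ_two] using (congrFun hu 1).symm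
  rw [hNP, hPE]

end Aux3



section CharPAux

variable {K : Type*} [Field K] {p : ℕ} [Fact p.Prime] [CharP K p]

lemma expand_mul (a b a' b' : K) :
    ((a • 1 + b • !![(0:K),1;0,0]) * (a' • 1 + b' • !![(0:K),1;0,0]) : Matrix (Fin 2) (Fin 2) K)
      = (a * a') • 1 + (a * b' + a' * b) • !![(0:K),1;0,0] := by
  simp only [add_mul, mul_add, Matrix.smul_mul, Matrix.mul_smul, smul_smul, Emat_sq,
    one_mul, mul_one, smul_zero, add_zero, add_smul]
  module

lemma comm_aux (a b a' b' : K) :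
    Commute ((a • 1 + b • !![(0:K),1;0,0]) : Matrix (Fin 2) (Fin 2) K)
      (a' • 1 + b' • !![(0:K),1;0,0]) := by
  unfold Commute SemiconjBy
  rw [expand_mul, expand_mul]
  ring_nf

lemma pow_p_aux (a b : K) :
    ((a • 1 + b • !![(0:K),1;0,0]) : Matrix (Fin 2) (Fin 2) K) ^ p = (a ^ p) • 1 := by
  have hcomm : Commute (a • (1 : Matrix (Fin 2) (Fin 2) K)) (b • !![(0:K),1;0,0]) := by
    unfold Commute SemiconjBy
    simp only [Matrix.smul_mul, Matrix.mul_smul, smul_smul, one_mul, mul_one]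
    rw [mul_comm]
  rw [add_pow_char_of_commute p hcomm, _root_.smul_pow, one_pow, _root_.smul_pow]
  have h2le : 2 ≤ p := (Fact.out : p.Prime).two_le
  have hE : (!![(0:K),1;0,0]) ^ p = 0 := by
    have hps : p = 2 + (p - 2) := by omega
    rw [hps, pow_add, pow_two, Emat_sq, zero_mul]
  rw [hE, smul_zero, add_zero]

variable [IsAlgClosed K]

lemma pElem_struct {g : GL (Fin 2) K} (h1 : toPGL K g ≠ 1) {k : ℕ}
    (hpk : toPGL K g ^ p ^ k = 1) :
    toPGL K (g ^ p) = 1 ∧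
      ∃ u : GL (Fin 2) K, (toPGL K u)⁻¹ * toPGL K g * toPGL K u = toPGL K (Ugl K) := by
  have hppos : 0 < p ^ k := pow_pos (Fact.out : p.Prime).pos k
  have hgpk : toPGL K (g ^ p ^ k) = 1 := by rw [map_pow]; exact hpk
  obtain ⟨c, hc⟩ := (toPGL_eq_one_iff _).1 hgpk
  have hcoe : ((g : Matrix (Fin 2) (Fin 2) K)) ^ p ^ k = (c : K) • 1 := by
    rw [← Units.val_pow_eq_pow_val]; exact hc
  obtain ⟨μ, hμ⟩ := IsAlgClosed.exists_pow_nat_eq (c : K) hppos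
  have hμ0 : μ ≠ 0 := by
    rintro rfl
    rw [zero_pow hppos.ne'] at hμ
    exact c.ne_zero hμ.symm
  set M : Matrix (Fin 2) (Fin 2) K := μ⁻¹ • ↑g with hM
  have hgM : (g : Matrix (Fin 2) (Fin 2) K) = μ • M := (smul_inv_smul₀ hμ0 _).symm
  have hMpk : M ^ p ^ k = 1 := by
    rw [hM, _root_.smul_pow, hcoe, smul_smul, ← hμ, inv_pow, inv_mul_cancel₀ (pow_ne_zero _ hμ0),
      one_smul]
  set N := M - 1 with hN
  have hNpk : N ^ p ^ k = 0 := by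
    rw [hN, sub_pow_char_pow_of_commute p k (Commute.one_right M), hMpk, one_pow, sub_self]
  have hN2 : N * N = 0 := sq_zero ⟨p ^ k, hNpk⟩
  have h2le : 2 ≤ p := (Fact.out : p.Prime).two_le
  have hNp : N ^ p = 0 := by
    have hps : p = 2 + (p - 2) := by omega
    rw [hps, pow_add, pow_two, hN2, zero_mul]
  have hM1N : M = 1 + N := by rw [hN]; abel
  have hMp : M ^ p = 1 := by
    rw [hM1N, add_pow_char_of_commute p (Commute.one_left N), one_pow, hNp, add_zero]
  constructor
  · rw [toPGL_eq_one_iff]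
    refine ⟨(Units.mk0 μ hμ0) ^ p, ?_⟩
    have h3 : ((g ^ p : GL (Fin 2) K) : Matrix (Fin 2) (Fin 2) K)
        = ((g : Matrix (Fin 2) (Fin 2) K)) ^ p := Units.val_pow_eq_pow_val g p
    rw [h3, hgM, _root_.smul_pow, hMp]
    simp [Units.val_pow_eq_pow_val]
  · by_cases hN0 : N = 0
    · exfalso
      apply h1
      rw [toPGL_eq_one_iff]
      refine ⟨Units.mk0 μ hμ0, ?_⟩
      have hM1 : M = 1 := by
        have := sub_eq_zero.1 (hN ▸ hN0 : M - 1 = 0)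
        exact this
      rw [hgM, hM1]
      simp
    · obtain ⟨P, hP⟩ := conj_nilp hN0 hN2
      refine ⟨P, ?_⟩
      rw [← _root_.map_inv, ← _root_.map_mul, ← _root_.map_mul, toPGL_eq_iff]
      refine ⟨Units.mk0 μ hμ0, ?_⟩
      calc (↑(P⁻¹ * g * P) : Matrix (Fin 2) (Fin 2) K)
          = ↑(P⁻¹) * ↑g * ↑P := by rw [Units.val_mul, Units.val_mul]
        _ = ↑(P⁻¹) * (μ • (1 + N)) * ↑P := by rw [hgM, hM1N]
        _ = μ • (↑(P⁻¹) * ((1 + N) * ↑P)) := by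
            rw [Matrix.mul_smul, Matrix.smul_mul, mul_assoc]
        _ = μ • (↑(P⁻¹) * (↑P * ((1 : Matrix (Fin 2) (Fin 2) K) + !![0,1;0,0]))) := by
            have hstep : (1 + N) * (↑P : Matrix (Fin 2) (Fin 2) K) = (P : Matrix (Fin 2) (Fin 2) K) * ((1 : Matrix (Fin 2) (Fin 2) K) + !![0,1;0,0]) := by
              rw [add_mul, one_mul, hP, mul_add, mul_one]
            rw [hstep]
        _ = μ • ((1 : Matrix (Fin 2) (Fin 2) K) + !![0,1;0,0]) := by
            rw [← mul_assoc, ← Units.val_mul, inv_mul_cancel, Units.val_one, one_mul]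
        _ = (↑(Units.mk0 μ hμ0) : K) • (↑(Ugl K) : Matrix (Fin 2) (Fin 2) K) := by
            rw [Ugl_eq]
            simp

end CharPAux


section Key

variable {K : Type*} [Field K] {p : ℕ} [Fact p.Prime] [CharP K p] [IsAlgClosed K]

lemma key {x : Equiv.Perm (ℙ K (Fin 2 → K))} (hx : x ∈ pgl K) (hx1 : x ≠ 1) {k : ℕ}
    (hxp : x ^ p ^ k = 1) :
    x ^ p = 1 ∧
    (∀ y ∈ pgl K, Commute x y → y ^ p = 1) ∧
    (∀ y ∈ pgl K, Commute x y → ∀ z ∈ pgl K, Commute x z → Commute y z) := by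
  obtain ⟨g, rfl⟩ := hx
  obtain ⟨hgp, u, hu⟩ := pElem_struct hx1 hxp
  have hxp1 : toPGL K g ^ p = 1 := by rw [← map_pow]; exact hgp
  set c : Equiv.Perm (ℙ K (Fin 2 → K)) := toPGL K u with hcdef
  have master : ∀ y, y ∈ pgl K → Commute (toPGL K g) y →
      ∃ (h' : GL (Fin 2) K) (a b : K), a ≠ 0 ∧
        (h' : Matrix (Fin 2) (Fin 2) K) = a • 1 + b • !![(0:K),1;0,0] ∧
        y = c * toPGL K h' * c⁻¹ := by
    intro y hy hcy
    obtain ⟨h, rfl⟩ := hy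
    set h' : GL (Fin 2) K := u⁻¹ * h * u with hh'
    have hyconj : toPGL K h' = c⁻¹ * toPGL K h * c := by
      rw [hh', _root_.map_mul, _root_.map_mul, _root_.map_inv, hcdef]
    have hcomm' : Commute (toPGL K (Ugl K)) (toPGL K h') := by
      rw [← hu, hyconj, hcdef]
      show _ = _
      calc ((toPGL K u)⁻¹ * toPGL K g * toPGL K u)
            * ((toPGL K u)⁻¹ * toPGL K h * toPGL K u)
          = (toPGL K u)⁻¹ * (toPGL K g * toPGL K h) * toPGL K u := by group
        _ = (toPGL K u)⁻¹ * (toPGL K h * toPGL K g) * toPGL K u := by rw [hcy]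
        _ = ((toPGL K u)⁻¹ * toPGL K h * toPGL K u)
            * ((toPGL K u)⁻¹ * toPGL K g * toPGL K u) := by group
    have heq : toPGL K (Ugl K * h') = toPGL K (h' * Ugl K) :=
      (_root_.map_mul (toPGL K) (Ugl K) h').trans
        (hcomm'.eq.trans (_root_.map_mul (toPGL K) h' (Ugl K)).symm)
    obtain ⟨cc, hcc⟩ := (toPGL_eq_iff _ _).1 heq
    rw [Units.val_mul, Units.val_mul, coe_Ugl] at hcc
    have hdet : ((h' : Matrix (Fin 2) (Fin 2) K)).det ≠ 0 := by
      have : IsUnit ((h' : Matrix (Fin 2) (Fin 2) K)) := ⟨h', rfl⟩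
      exact ((Matrix.isUnit_iff_isUnit_det _).1 this).ne_zero
    obtain ⟨a, b, ha, hab⟩ := cent_aux hdet hcc
    refine ⟨h', a, b, ha, hab, ?_⟩
    have : h = u * h' * u⁻¹ := by rw [hh']; group
    rw [this, _root_.map_mul, _root_.map_mul, _root_.map_inv, hcdef]
  have scalar_pow : ∀ (h' : GL (Fin 2) K) (a b : K), a ≠ 0 →
      (h' : Matrix (Fin 2) (Fin 2) K) = a • 1 + b • !![(0:K),1;0,0] →
      toPGL K h' ^ p = 1 := by
    intro h' a b ha hab
    rw [← map_pow, toPGL_eq_one_iff]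
    refine ⟨Units.mk0 (a ^ p) (pow_ne_zero _ ha), ?_⟩
    rw [Units.val_pow_eq_pow_val, hab, pow_p_aux]
    simp
  refine ⟨hxp1, ?_, ?_⟩
  · intro y hy hcy
    obtain ⟨h', a, b, ha, hab, rfl⟩ := master y hy hcy
    rw [conj_pow, scalar_pow h' a b ha hab, mul_one, mul_inv_cancel]
  · intro y hy hcy z hz hcz
    obtain ⟨h₁, a₁, b₁, ha₁, hab₁, rfl⟩ := master y hy hcy
    obtain ⟨h₂, a₂, b₂, ha₂, hab₂, rfl⟩ := master z hz hcz
    have hcomm12 : toPGL K h₁ * toPGL K h₂ = toPGL K h₂ * toPGL K h₁ := by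
      rw [← _root_.map_mul, ← _root_.map_mul]
      congr 1
      ext : 1
      rw [Units.val_mul, Units.val_mul, hab₁, hab₂]
      exact comm_aux a₁ b₁ a₂ b₂
    show _ = _
    calc (c * toPGL K h₁ * c⁻¹) * (c * toPGL K h₂ * c⁻¹)
        = c * (toPGL K h₁ * toPGL K h₂) * c⁻¹ := by group
      _ = c * (toPGL K h₂ * toPGL K h₁) * c⁻¹ := by rw [hcomm12]
      _ = (c * toPGL K h₂ * c⁻¹) * (c * toPGL K h₁ * c⁻¹) := by group

end Key



/-- In a finite subgroup `G` of `PGL(2, ℚ̄_q)` with `p ∣ |G|` and `Q` a Sylow `p`-subgroup,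
the centralizer of any non-identity element of `Q` is `Q`, and distinct Sylow `p`-subgroups
intersect trivially. -/
theorem stmt5 (Fq : Type*) [Field Fq] [Fintype Fq] (p : ℕ) (hp : p.Prime) [CharP Fq p]
    (K : Type*) [Field K] [Algebra Fq K] [IsAlgClosure Fq K]
    (G : Subgroup (Equiv.Perm (ℙ K (Fin 2 → K)))) (hG : G ≤ pgl K) (hfin : Finite G)
    (hdvd : p ∣ Nat.card G) (Q : Sylow p G) :
    (∀ g : G, g ∈ Q → g ≠ 1 → Subgroup.centralizer {g} = (Q : Subgroup G)) ∧
    (∀ Q₁ Q₂ : Sylow p G, Q₁ ≠ Q₂ → (Q₁ : Subgroup G) ⊓ (Q₂ : Subgroup G) = ⊥) := by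
  haveI : Fact p.Prime := ⟨hp⟩
  haveI : CharP K p := charP_of_injective_algebraMap (algebraMap Fq K).injective p
  haveI : IsAlgClosed K := IsAlgClosure.isAlgClosed Fq
  have hcard : Nat.card G ≠ 0 := Nat.card_pos.ne'
  have hmem : ∀ q : G, ((q : Equiv.Perm (ℙ K (Fin 2 → K))) ∈ pgl K) := fun q => hG q.2
  have coeComm : ∀ y z : G, Commute y z ↔
      Commute (y : Equiv.Perm (ℙ K (Fin 2 → K))) (z : Equiv.Perm (ℙ K (Fin 2 → K))) := by
    intro y z
    simp only [Commute, SemiconjBy, Subtype.ext_iff, Subgroup.coe_mul]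
  have coePow : ∀ y : G, y ^ p = 1 ↔ (y : Equiv.Perm (ℙ K (Fin 2 → K))) ^ p = 1 := by
    intro y
    rw [Subtype.ext_iff]
    simp only [SubgroupClass.coe_pow, OneMemClass.coe_one]
  have keyG : ∀ (Q' : Sylow p G) (g : G), g ∈ Q' → g ≠ 1 →
      (g ^ p = 1 ∧ (∀ y : G, Commute g y → y ^ p = 1) ∧
        (∀ y z : G, Commute g y → Commute g z → Commute y z)) := by
    intro Q' g hgQ hg1
    obtain ⟨k, hk⟩ := Q'.isPGroup' ⟨g, hgQ⟩
    have hk' : g ^ p ^ k = 1 := by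
      have := congrArg (Subtype.val) hk
      simpa using this
    have hx1 : (g : Equiv.Perm (ℙ K (Fin 2 → K))) ≠ 1 := by
      intro h; exact hg1 (Subtype.ext h)
    have hxpk : (g : Equiv.Perm (ℙ K (Fin 2 → K))) ^ p ^ k = 1 := by
      have := congrArg (Subtype.val) hk'
      simpa using this
    obtain ⟨h1, h2, h3⟩ := key (hmem g) hx1 hxpk
    refine ⟨Subtype.ext (by simpa using h1), ?_, ?_⟩
    · intro y hcy
      rw [coePow]
      exact h2 _ (hmem y) ((coeComm g y).1 hcy)
    · intro y z hcy hcz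
      rw [coeComm]
      exact h3 _ (hmem y) ((coeComm g y).1 hcy) _ (hmem z) ((coeComm g z).1 hcz)
  have hQnontriv : ∀ Q' : Sylow p G, Nontrivial (Q' : Subgroup G) := by
    intro Q'
    rw [← Finite.one_lt_card_iff_nontrivial]
    rw [Sylow.card_eq_multiplicity Q']
    have hpos := hp.factorization_pos_of_dvd hcard hdvd
    calc 1 < p := hp.one_lt
      _ = p ^ 1 := (pow_one p).symm
      _ ≤ p ^ (Nat.card G).factorization p := Nat.pow_le_pow_right hp.pos hpos
  have main : ∀ (Q' : Sylow p G) (g : G), g ∈ Q' → g ≠ 1 →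
      Subgroup.centralizer {g} = (Q' : Subgroup G) := by
    intro Q' g hgQ hg1
    obtain ⟨hgp, hcentpow, _⟩ := keyG Q' g hgQ hg1
    have hQle : (Q' : Subgroup G) ≤ Subgroup.centralizer {g} := by
      haveI := hQnontriv Q'
      haveI : Nontrivial ((Q' : Subgroup G) : Type _) := hQnontriv Q'
      haveI := Q'.isPGroup'.center_nontrivial
      obtain ⟨w', hw'⟩ := exists_ne (1 : Subgroup.center ((Q' : Subgroup G) : Type _))
      have hcentn : True := trivial
      set wq : ((Q' : Subgroup G) : Type _) := (w' : ((Q' : Subgroup G) : Type _)) with hwq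
      set w : G := (wq : G) with hw
      have hwQ : w ∈ Q' := wq.2
      have hw1 : w ≠ 1 := by
        intro h
        exact hw' (Subtype.ext (Subtype.ext h))
      have hwcomm : ∀ r : G, r ∈ Q' → Commute w r := by
        intro r hr
        have h0 := Subgroup.mem_center_iff.1 w'.2 ⟨r, hr⟩
        have h2 := congrArg (fun z : ((Q' : Subgroup G) : Type _) => (z : G)) h0
        simp only [Subgroup.coe_mul] at h2
        exact h2.symm
      obtain ⟨_, _, hcw⟩ := keyG Q' w hwQ hw1
      intro r hr
      rw [Subgroup.mem_centralizer_iff]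
      intro s hs
      rw [Set.mem_singleton_iff] at hs
      subst hs
      exact (hcw s r (hwcomm s hgQ) (hwcomm r hr)).eq
    have hCp : IsPGroup p (Subgroup.centralizer {g} : Subgroup G) := by
      intro y
      refine ⟨1, ?_⟩
      have hcy : Commute g (y : G) := by
        have hy2 := y.2
        rw [Subgroup.mem_centralizer_iff] at hy2
        exact hy2 g (Set.mem_singleton g)
      have hyp := hcentpow (y : G) hcy
      rw [pow_one]
      exact Subtype.ext (by simpa using hyp)
    exact Q'.3 hCp hQle
  refine ⟨fun g hg h1 => main Q g hg h1, ?_⟩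
  intro Q₁ Q₂ hne
  rw [Subgroup.eq_bot_iff_forall]
  intro x hx
  by_contra hx1
  have e1 := main Q₁ x (Subgroup.mem_inf.1 hx).1 hx1
  have e2 := main Q₂ x (Subgroup.mem_inf.1 hx).2 hx1
  exact hne (Sylow.ext (e1.symm.trans e2))

end PaperPGL
end

section
/- Let G be a finite subgroup of PGL(2, \bar{F}_q) with p dividing |G|. Then G has at most two non-regular orbits on P^1(\bar{F}_q), and G has exactly one non-regular orbit if and only if G is a p-group. -/
open Matrix Polynomial
open scoped LinearAlgebra.Projectivization MatrixGroups Pointwise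

namespace PaperPGL

/-!
A nontrivial element of `PGL(2, K)`, `K` algebraically closed of characteristic `p`, is either
unipotent, with one fixed point on `ℙ¹` and `g ^ p = 1`, or semisimple, with two fixed points and
`g ^ p ≠ 1`. Hence `∑_{g ≠ 1} |Fix g| = 2|G| - 1 - P` where `P = #{g | g ^ p = 1}`. Counted by
points instead, a non-regular orbit `O` contributes `|G| - |O| ≥ |G| / 2` to this sum, and the
orbit of a fixed point of an element of order `p` has fewer than `P` points, being covered by the
fixed points of the conjugates of that element. This leaves room for at most two non-regular
orbits, and for a single one exactly when `P = |G|`. Finally `P = |G|` for a `p`-group, because an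
element with two fixed points would share them with a power of order `p`.
-/

open MulAction

section Geometry

variable {K : Type*} [Field K]

theorem toPGL_mk (g : GL (Fin 2) K) {v : Fin 2 → K} (hv : v ≠ 0) :
    toPGL K g (.mk K v hv) =
      .mk K ((g : Matrix (Fin 2) (Fin 2) K) *ᵥ v) (fun h => hv (glInj K g (by simpa using h))) :=
  rfl

theorem toPGL_mk_eq_mk_iff (g : GL (Fin 2) K) {v : Fin 2 → K} (hv : v ≠ 0) :
    toPGL K g (.mk K v hv) = .mk K v hv ↔ ∃ c : K, (g : Matrix (Fin 2) (Fin 2) K) *ᵥ v = c • v := by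
  rw [toPGL_mk, Projectivization.mk_eq_mk_iff']
  exact exists_congr fun c => eq_comm

theorem toPGL_eq_one_of_forall_mulVec_eq_smul {g : GL (Fin 2) K} {c : K}
    (h : ∀ v, (g : Matrix (Fin 2) (Fin 2) K) *ᵥ v = c • v) : toPGL K g = 1 := by
  ext x
  induction x using Projectivization.ind with
  | h v hv => exact (toPGL_mk_eq_mk_iff g hv).2 ⟨c, h v⟩

theorem toPGL_eq_one_of_linearIndependent {g : GL (Fin 2) K} {v w : Fin 2 → K}
    (hvw : LinearIndependent K ![v, w]) {c : K}
    (hv : (g : Matrix (Fin 2) (Fin 2) K) *ᵥ v = c • v)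
    (hw : (g : Matrix (Fin 2) (Fin 2) K) *ᵥ w = c • w) : toPGL K g = 1 := by
  have hscalar : (g : Matrix (Fin 2) (Fin 2) K).mulVecLin = c • LinearMap.id :=
    LinearMap.ext_on_range (hvw.span_eq_top_of_card_eq_finrank' (by simp)) fun i => by
      fin_cases i <;> simp [hv, hw]
  exact toPGL_eq_one_of_forall_mulVec_eq_smul fun u => by
    simpa using LinearMap.congr_fun hscalar u

theorem toPGL_ne_one_of_linearIndependent {g : GL (Fin 2) K} {v w : Fin 2 → K}
    (hvw : LinearIndependent K ![v, w]) {a b : K} (hab : a ≠ b)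
    (hv : (g : Matrix (Fin 2) (Fin 2) K) *ᵥ v = a • v)
    (hw : (g : Matrix (Fin 2) (Fin 2) K) *ᵥ w = b • w) : toPGL K g ≠ 1 := by
  intro h1
  have hvw0 : v + w ≠ 0 := fun h => by
    simpa using (LinearIndependent.pair_iff.1 hvw 1 1 (by simpa using h)).1
  obtain ⟨c, hc⟩ := (toPGL_mk_eq_mk_iff g hvw0).1 (by rw [h1]; rfl)
  rw [mulVec_add, hv, hw] at hc
  have hcoeff := LinearIndependent.pair_iff.1 hvw (a - c) (b - c) (by
    rw [sub_smul, sub_smul]; linear_combination (norm := module) hc)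
  exact hab (by linear_combination hcoeff.1 - hcoeff.2)

theorem linearIndependent_of_mk_ne_mk {V : Type*} [AddCommGroup V] [Module K V] {v w : V}
    (hv : v ≠ 0) (hw : w ≠ 0) (h : Projectivization.mk K v hv ≠ .mk K w hw) :
    LinearIndependent K ![v, w] :=
  (LinearIndependent.pair_iff' hv).2 fun a ha =>
    h ((Projectivization.mk_eq_mk_iff' K w v hw hv).2 ⟨a, ha⟩).symm

theorem mk_eq_mk_of_mulVec_eq_smul {g : GL (Fin 2) K} (h1 : toPGL K g ≠ 1) {v w : Fin 2 → K}
    (hv : v ≠ 0) (hw : w ≠ 0) {c : K}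
    (hcv : (g : Matrix (Fin 2) (Fin 2) K) *ᵥ v = c • v)
    (hcw : (g : Matrix (Fin 2) (Fin 2) K) *ᵥ w = c • w) :
    Projectivization.mk K v hv = .mk K w hw := by
  by_contra h
  exact h1 (toPGL_eq_one_of_linearIndependent (linearIndependent_of_mk_ne_mk hv hw h) hcv hcw)

theorem mk_ne_mk_of_mulVec_eq_smul {n : Type*} [Fintype n] {M : Matrix n n K} {v w : n → K}
    (hv : v ≠ 0) (hw : w ≠ 0) {a b : K} (hab : a ≠ b) (hav : M *ᵥ v = a • v)
    (hbw : M *ᵥ w = b • w) : Projectivization.mk K v hv ≠ .mk K w hw := fun h => by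
  obtain ⟨s, rfl⟩ := (Projectivization.mk_eq_mk_iff' K v w hv hw).1 h
  rw [mulVec_smul, hbw, smul_comm] at hav
  exact hab (smul_left_injective K hv hav).symm

theorem exists_mulVec_eq_smul_iff (M : Matrix (Fin 2) (Fin 2) K) (c : K) :
    (∃ v ≠ 0, M *ᵥ v = c • v) ↔ c ^ 2 - M.trace * c + M.det = 0 := by
  have hdet : (M - c • 1).det = c ^ 2 - M.trace * c + M.det := by
    simp [det_fin_two, trace_fin_two]; ring
  rw [← hdet, ← exists_mulVec_eq_zero_iff]
  simp only [sub_mulVec, smul_mulVec, one_mulVec, sub_eq_zero]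

theorem pow_mulVec_eq_smul {n R : Type*} [Fintype n] [DecidableEq n] [CommSemiring R]
    {M : Matrix n n R} {v : n → R} {c : R} (h : M *ᵥ v = c • v) (k : ℕ) :
    (M ^ k) *ᵥ v = c ^ k • v := by
  induction k with
  | zero => simp
  | succ k ih => rw [pow_succ, ← mulVec_mulVec, h, mulVec_smul, ih, smul_smul, pow_succ']

theorem fixedBy_toPGL {g : GL (Fin 2) K} (h1 : toPGL K g ≠ 1) {v w : Fin 2 → K} (hv : v ≠ 0)
    (hw : w ≠ 0) {a b : K} (hav : (g : Matrix (Fin 2) (Fin 2) K) *ᵥ v = a • v)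
    (hbw : (g : Matrix (Fin 2) (Fin 2) K) *ᵥ w = b • w)
    (htr : (g : Matrix (Fin 2) (Fin 2) K).trace = a + b)
    (hdet : (g : Matrix (Fin 2) (Fin 2) K).det = a * b) :
    fixedBy (ℙ K (Fin 2 → K)) (toPGL K g) = {.mk K v hv, .mk K w hw} := by
  ext x
  induction x using Projectivization.ind with
  | h u hu =>
    rw [mem_fixedBy, Set.mem_insert_iff, Set.mem_singleton_iff]
    refine ⟨fun hfix => ?_, ?_⟩
    · obtain ⟨c, hc⟩ := (toPGL_mk_eq_mk_iff g hu).1 hfix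
      have hroot := (exists_mulVec_eq_smul_iff _ c).1 ⟨u, hu, hc⟩
      rw [htr, hdet] at hroot
      rcases mul_eq_zero.1 (show (c - a) * (c - b) = 0 by linear_combination hroot) with hca | hcb
      · exact .inl (mk_eq_mk_of_mulVec_eq_smul h1 hu hv hc (by rwa [sub_eq_zero.1 hca]))
      · exact .inr (mk_eq_mk_of_mulVec_eq_smul h1 hu hw hc (by rwa [sub_eq_zero.1 hcb]))
    · rintro (h | h) <;> rw [h]
      exacts [(toPGL_mk_eq_mk_iff g hv).2 ⟨a, hav⟩, (toPGL_mk_eq_mk_iff g hw).2 ⟨b, hbw⟩]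

variable (p : ℕ) [Fact p.Prime] [CharP K p]

theorem toPGL_pow_char_eq_one (g : GL (Fin 2) K) {a : K}
    (htr : (g : Matrix (Fin 2) (Fin 2) K).trace = a + a)
    (hdet : (g : Matrix (Fin 2) (Fin 2) K).det = a * a) : toPGL K g ^ p = 1 := by
  set M := (g : Matrix (Fin 2) (Fin 2) K)
  have hcharpoly : M.charpoly = (X - C a) ^ 2 := by
    rw [charpoly_fin_two, htr, hdet, C_add, C_mul]; ring
  have hnilpotent : (M - algebraMap K _ a) ^ 2 = 0 := by
    simpa [hcharpoly] using M.aeval_self_charpoly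
  have hMp : M ^ p = algebraMap K _ (a ^ p) := by
    calc M ^ p = (algebraMap K _ a + (M - algebraMap K _ a)) ^ p := by rw [add_sub_cancel]
      _ = algebraMap K _ (a ^ p) := by
        rw [add_pow_char_of_commute p (Algebra.commutes a _),
          pow_eq_zero_of_le (Fact.out : p.Prime).two_le hnilpotent, add_zero, map_pow]
  rw [← map_pow]
  refine toPGL_eq_one_of_forall_mulVec_eq_smul (c := a ^ p) fun u => ?_
  rw [Units.val_pow_eq_pow_val, hMp, algebraMap_eq_diagonal]
  simp [funext_iff]

theorem toPGL_pow_char_ne_one {g : GL (Fin 2) K} {v w : Fin 2 → K}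
    (hvw : LinearIndependent K ![v, w]) {a b : K} (hab : a ≠ b)
    (hav : (g : Matrix (Fin 2) (Fin 2) K) *ᵥ v = a • v)
    (hbw : (g : Matrix (Fin 2) (Fin 2) K) *ᵥ w = b • w) : toPGL K g ^ p ≠ 1 := by
  rw [← map_pow]
  refine toPGL_ne_one_of_linearIndependent hvw (fun h => hab (frobenius_inj K p h)) ?_ ?_ <;>
    rw [Units.val_pow_eq_pow_val] <;> exact pow_mulVec_eq_smul ‹_› p

open scoped Classical in
theorem ncard_fixedBy_of_mem_pgl [IsAlgClosed K] {σ : Equiv.Perm (ℙ K (Fin 2 → K))}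
    (hσ : σ ∈ pgl K) (h1 : σ ≠ 1) :
    (fixedBy (ℙ K (Fin 2 → K)) σ).ncard = if σ ^ p = 1 then 1 else 2 := by
  obtain ⟨g, rfl⟩ := hσ
  set M := (g : Matrix (Fin 2) (Fin 2) K)
  obtain ⟨a, ha⟩ := IsAlgClosed.exists_root M.charpoly (by simp [charpoly_degree_eq_dim])
  rw [charpoly_fin_two] at ha
  simp only [IsRoot, eval_add, eval_sub, eval_pow, eval_X, eval_mul, eval_C] at ha
  obtain ⟨b, htr⟩ : ∃ b, M.trace = a + b := ⟨M.trace - a, by ring⟩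
  have hdet : M.det = a * b := by linear_combination ha + a * htr
  obtain ⟨v, hv, hav⟩ := (exists_mulVec_eq_smul_iff M a).2 ha
  obtain ⟨w, hw, hbw⟩ := (exists_mulVec_eq_smul_iff M b).2 (by rw [htr, hdet]; ring)
  rw [fixedBy_toPGL h1 hv hw hav hbw htr hdet]
  by_cases hab : a = b
  · subst hab
    rw [mk_eq_mk_of_mulVec_eq_smul h1 hw hv hbw hav, Set.pair_eq_singleton, Set.ncard_singleton,
      if_pos (toPGL_pow_char_eq_one p g htr hdet)]
  · have hne : Projectivization.mk K v hv ≠ .mk K w hw :=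
      mk_ne_mk_of_mulVec_eq_smul hv hw hab hav hbw
    have hvw : LinearIndependent K ![v, w] := linearIndependent_of_mk_ne_mk hv hw hne
    have hpow : toPGL K g ^ p ≠ 1 := toPGL_pow_char_ne_one p hvw hab hav hbw
    rw [Set.ncard_pair hne, if_neg hpow]

end Geometry

/-- The fixed-point behaviour of `PGL(2)` in characteristic `p` on `ℙ¹`
(`fixedPointDichotomy_of_le_pgl`). -/
def FixedPointDichotomy (p : ℕ) (G X : Type*) [Group G] [DecidableEq G] [MulAction G X] : Prop :=
  ∀ g : G, g ≠ 1 → (fixedBy X g).ncard = if g ^ p = 1 then 1 else 2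

theorem fixedPointDichotomy_of_le_pgl {K : Type*} [Field K] [IsAlgClosed K] (p : ℕ)
    [Fact p.Prime] [CharP K p] {G : Subgroup (Equiv.Perm (ℙ K (Fin 2 → K)))} [DecidableEq G]
    (hG : G ≤ pgl K) : FixedPointDichotomy p G (ℙ K (Fin 2 → K)) := fun g hg => by
  have h := ncard_fixedBy_of_mem_pgl p (hG g.2) (by simpa using hg)
  simp only [← Subgroup.coe_pow, OneMemClass.coe_eq_one] at h
  exact h

section Counting

open Finset

variable {G X : Type*} [Group G] [MulAction G X]

theorem stabilizer_ne_bot_iff {x : X} :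
    stabilizer G x ≠ ⊥ ↔ ∃ g : G, g ≠ 1 ∧ x ∈ fixedBy X g := by
  rw [Subgroup.ne_bot_iff_exists_ne_one]
  exact ⟨fun ⟨g, hg⟩ => ⟨g, by simpa using hg, g.2⟩,
    fun ⟨g, hg, hx⟩ => ⟨⟨g, hx⟩, fun h => hg (congrArg Subtype.val h)⟩⟩

theorem two_mul_ncard_orbit_le [Finite G] {x : X} (h : stabilizer G x ≠ ⊥) :
    2 * (orbit G x).ncard ≤ Nat.card G := by
  rw [← index_stabilizer, ← (stabilizer G x).index_mul_card, mul_comm]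
  exact Nat.mul_le_mul_left _ ((Subgroup.one_lt_card_iff_ne_bot _).2 h)

variable [Fintype G]

theorem sum_ncard_orbit_inter_fixedBy (z : X) :
    ∑ g : G, (orbit G z ∩ fixedBy X g).ncard = Nat.card G := by
  classical
  have hfin : (orbit G z).Finite := Set.finite_range _
  have hm : 0 < (orbit G z).ncard := (Set.ncard_pos hfin).2 ⟨z, mem_orbit_self z⟩
  have hstab : ∀ x ∈ hfin.toFinset, (orbit G z).ncard * #{g : G | g • x = x} = Nat.card G := by
    intro x hx
    rw [Set.Finite.mem_toFinset] at hx
    rw [← orbit_eq_iff.2 hx, ← index_stabilizer, ← (stabilizer G x).index_mul_card,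
      Nat.card_eq_fintype_card (α := stabilizer G x), Fintype.card_subtype]
    rfl
  calc ∑ g : G, (orbit G z ∩ fixedBy X g).ncard
      = ∑ g : G, #{x ∈ hfin.toFinset | g • x = x} := by
        refine sum_congr rfl fun g _ => ?_
        rw [← Set.ncard_coe_finset, coe_filter]
        congr 1
        ext x
        simp [mem_fixedBy]
    _ = ∑ x ∈ hfin.toFinset, #{g : G | g • x = x} := by
        simp only [card_filter]
        exact sum_comm
    _ = Nat.card G := by
        apply Nat.eq_of_mul_eq_mul_left hm
        rw [mul_sum, sum_congr rfl hstab, sum_const, smul_eq_mul,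
          ← Set.ncard_eq_toFinset_card _ hfin]

theorem sum_ncard_union_inter_fixedBy {A B : Set X} (h : Disjoint A B) (hA : A.Finite)
    (hB : B.Finite) :
    ∑ g : G, ((A ∪ B) ∩ fixedBy X g).ncard =
      ∑ g : G, (A ∩ fixedBy X g).ncard + ∑ g : G, (B ∩ fixedBy X g).ncard := by
  rw [← sum_add_distrib]
  refine sum_congr rfl fun g _ => ?_
  rw [Set.union_inter_distrib_right, Set.ncard_union_eq
    (h.mono Set.inter_subset_left Set.inter_subset_left) (hA.inter_of_left _) (hB.inter_of_left _)]

variable [DecidableEq G]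

theorem sum_ncard_inter_fixedBy_le (hfin : ∀ g : G, g ≠ 1 → (fixedBy X g).Finite) (W : Set X) :
    ∑ g : G, (W ∩ fixedBy X g).ncard ≤
      W.ncard + ∑ g ∈ univ.erase (1 : G), (fixedBy X g).ncard := by
  rw [← add_sum_erase _ _ (mem_univ 1), fixedBy_one_eq_univ, Set.inter_univ]
  refine Nat.add_le_add_left (sum_le_sum fun g hg => ?_) _
  exact Set.ncard_le_ncard Set.inter_subset_right (hfin g (ne_of_mem_erase hg))

theorem sum_ncard_inter_fixedBy_eq {W : Set X} (hW : ∀ g : G, g ≠ 1 → fixedBy X g ⊆ W) :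
    ∑ g : G, (W ∩ fixedBy X g).ncard =
      W.ncard + ∑ g ∈ univ.erase (1 : G), (fixedBy X g).ncard := by
  rw [← add_sum_erase _ _ (mem_univ 1), fixedBy_one_eq_univ, Set.inter_univ]
  congr 1
  exact sum_congr rfl fun g hg => by rw [Set.inter_eq_right.2 (hW g (ne_of_mem_erase hg))]

end Counting

namespace FixedPointDichotomy

open Finset

variable {G X : Type*} [Group G] [DecidableEq G] [MulAction G X] {p : ℕ}

theorem finite_fixedBy (hfix : FixedPointDichotomy p G X) {g : G} (hg : g ≠ 1) :
    (fixedBy X g).Finite :=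
  Set.finite_of_ncard_ne_zero (by rw [hfix g hg]; split_ifs <;> norm_num)

theorem exists_fixedBy_eq_singleton (hfix : FixedPointDichotomy p G X) {g : G} (hg : g ≠ 1)
    (hgp : g ^ p = 1) : ∃ z : X, fixedBy X g = {z} :=
  Set.ncard_eq_one.1 ((hfix g hg).trans (if_pos hgp))

theorem pow_eq_one_of_pow_pow_eq_one (hfix : FixedPointDichotomy p G X) :
    ∀ (k : ℕ) (g : G), g ^ p ^ k = 1 → g ^ p = 1
  | 0, g, h => by rw [pow_zero, pow_one] at h; rw [h, one_pow]
  | k + 1, g, h => by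
    rw [pow_succ', pow_mul] at h
    have hpp : (g ^ p) ^ p = 1 := hfix.pow_eq_one_of_pow_pow_eq_one k (g ^ p) h
    by_contra hgp
    have hg : g ≠ 1 := by rintro rfl; exact hgp (one_pow p)
    have hsub : fixedBy X g ⊆ fixedBy X (g ^ p) := by
      simpa using fixedBy_subset_fixedBy_zpow X g p
    have hle := Set.ncard_le_ncard hsub (hfix.finite_fixedBy hgp)
    rw [hfix g hg, if_neg hgp, hfix _ hgp, if_pos hpp] at hle
    omega

theorem isPGroup_iff (hfix : FixedPointDichotomy p G X) :
    IsPGroup p G ↔ ∀ g : G, g ^ p = 1 :=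
  ⟨fun h g => (h g).elim fun k hk => hfix.pow_eq_one_of_pow_pow_eq_one k g hk,
    fun h g => ⟨1, by rw [pow_one]; exact h g⟩⟩

variable [Fintype G]

theorem sum_ncard_fixedBy_add_card (hfix : FixedPointDichotomy p G X) :
    ∑ g ∈ univ.erase (1 : G), (fixedBy X g).ncard + #{g : G | g ^ p = 1} + 1 =
      2 * Nat.card G := by
  have hsum : ∑ g ∈ univ.erase (1 : G), (fixedBy X g).ncard + 1 =
      ∑ g : G, if g ^ p = 1 then 1 else 2 := by
    rw [← add_sum_erase univ _ (mem_univ 1), one_pow, if_pos rfl, add_comm,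
      sum_congr rfl fun g hg => hfix g (ne_of_mem_erase hg)]
  rw [add_right_comm, hsum, card_filter, ← sum_add_distrib, Nat.card_eq_fintype_card,
    ← card_univ, mul_comm, ← smul_eq_mul, ← sum_const]
  exact sum_congr rfl fun g _ => by split_ifs <;> rfl

theorem ncard_orbit_add_one_le (hfix : FixedPointDichotomy p G X) {g₀ : G} (hg₀ : g₀ ≠ 1)
    (hg₀p : g₀ ^ p = 1) {z : X} (hz : z ∈ fixedBy X g₀) :
    (orbit G z).ncard + 1 ≤ #{g : G | g ^ p = 1} := by
  set A := {g ∈ univ.erase (1 : G) | g ^ p = 1}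
  have hA : #A + 1 = #{g : G | g ^ p = 1} := by
    rw [show A = (univ.filter fun g : G => g ^ p = 1).erase 1 from filter_erase ..,
      card_erase_of_mem (by simp)]
    exact Nat.sub_add_cancel (card_pos.2 ⟨1, by simp⟩)
  have hmemA : ∀ a ∈ A, a ≠ 1 ∧ a ^ p = 1 := fun a ha => by
    simp only [A, mem_filter, mem_erase] at ha
    exact ⟨ha.1.1, ha.2⟩
  have hcover : orbit G z ⊆ ⋃ a ∈ A, fixedBy X a := by
    rintro _ ⟨h, rfl⟩
    refine Set.mem_biUnion (x := h * g₀ * h⁻¹) ?_ ?_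
    · simp [A, conj_pow, hg₀p, hg₀]
    · rw [← smul_fixedBy]
      exact Set.smul_mem_smul_set hz
  rw [← hA]
  gcongr
  calc (orbit G z).ncard ≤ (⋃ a ∈ A, fixedBy X a).ncard :=
        Set.ncard_le_ncard hcover (A.finite_toSet.biUnion fun a ha =>
          hfix.finite_fixedBy (hmemA a ha).1)
    _ ≤ ∑ a ∈ A, (fixedBy X a).ncard := A.set_ncard_biUnion_le _
    _ = #A := by
        rw [card_eq_sum_ones]
        exact sum_congr rfl fun a ha => by rw [hfix a (hmemA a ha).1, if_pos (hmemA a ha).2]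

theorem orbit_eq_or_orbit_eq_or_orbit_eq (hfix : FixedPointDichotomy p G X) {g₀ : G}
    (hg₀ : g₀ ≠ 1) (hg₀p : g₀ ^ p = 1) {z₁ : X} (hz₁ : z₁ ∈ fixedBy X g₀) {z₂ z₃ : X}
    (hz₂ : stabilizer G z₂ ≠ ⊥) (hz₃ : stabilizer G z₃ ≠ ⊥) :
    orbit G z₂ = orbit G z₁ ∨ orbit G z₃ = orbit G z₁ ∨ orbit G z₂ = orbit G z₃ := by
  by_contra! h
  obtain ⟨h₂₁, h₃₁, h₂₃⟩ := h
  have hdisj : ∀ {x y : X}, orbit G x ≠ orbit G y → Disjoint (orbit G x) (orbit G y) :=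
    fun h => (orbit.eq_or_disjoint _ _).resolve_left h
  have hfin : ∀ x : X, (orbit G x).Finite := fun x => Set.finite_range _
  have hdisj₁₂₃ : Disjoint (orbit G z₁ ∪ orbit G z₂) (orbit G z₃) :=
    Set.disjoint_union_left.2 ⟨hdisj (Ne.symm h₃₁), hdisj h₂₃⟩
  have hcount := sum_ncard_inter_fixedBy_le (fun _ => hfix.finite_fixedBy)
    (orbit G z₁ ∪ orbit G z₂ ∪ orbit G z₃)
  rw [sum_ncard_union_inter_fixedBy hdisj₁₂₃ ((hfin _).union (hfin _)) (hfin _),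
    sum_ncard_union_inter_fixedBy (hdisj (Ne.symm h₂₁)) (hfin _) (hfin _),
    sum_ncard_orbit_inter_fixedBy, sum_ncard_orbit_inter_fixedBy, sum_ncard_orbit_inter_fixedBy,
    Set.ncard_union_eq hdisj₁₂₃ ((hfin _).union (hfin _)) (hfin _),
    Set.ncard_union_eq (hdisj (Ne.symm h₂₁)) (hfin _) (hfin _)] at hcount
  have := hfix.sum_ncard_fixedBy_add_card
  have := hfix.ncard_orbit_add_one_le hg₀ hg₀p hz₁
  have := two_mul_ncard_orbit_le hz₂
  have := two_mul_ncard_orbit_le hz₃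
  -- `3|G| ≤ |O₁| + |O₂| + |O₃| + (2|G| - 1 - P)` with `|O₁| < P` and `|O₂|, |O₃| ≤ |G| / 2`
  omega

theorem exists_forall_orbit_eq_or_orbit_eq (hfix : FixedPointDichotomy p G X) {g₀ : G}
    (hg₀ : g₀ ≠ 1) (hg₀p : g₀ ^ p = 1) :
    ∃ z₁ z₂ : X, ∀ z : X, stabilizer G z ≠ ⊥ →
      orbit G z = orbit G z₁ ∨ orbit G z = orbit G z₂ := by
  obtain ⟨z₁, hz₁⟩ := hfix.exists_fixedBy_eq_singleton hg₀ hg₀p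
  have hz₁ : z₁ ∈ fixedBy X g₀ := hz₁ ▸ rfl
  by_cases h : ∃ w, stabilizer G w ≠ ⊥ ∧ orbit G w ≠ orbit G z₁
  · obtain ⟨w, hw, hwz₁⟩ := h
    refine ⟨z₁, w, fun z hz => ?_⟩
    rcases hfix.orbit_eq_or_orbit_eq_or_orbit_eq hg₀ hg₀p hz₁ hw hz with h | h | h
    exacts [absurd h hwz₁, .inl h, .inr h.symm]
  · push Not at h
    exact ⟨z₁, z₁, fun z hz => .inl (h z hz)⟩

theorem exists_forall_orbit_eq_iff (hfix : FixedPointDichotomy p G X) {g₀ : G}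
    (hg₀ : g₀ ≠ 1) (hg₀p : g₀ ^ p = 1) :
    (∃ z : X, stabilizer G z ≠ ⊥ ∧ ∀ w : X, stabilizer G w ≠ ⊥ → orbit G w = orbit G z) ↔
      ∀ g : G, g ^ p = 1 := by
  have htotal := hfix.sum_ncard_fixedBy_add_card
  have hcard : Nat.card G = #(univ : Finset G) := by rw [Nat.card_eq_fintype_card, card_univ]
  have hfin : ∀ x : X, (orbit G x).Finite := fun x => Set.finite_range _
  constructor
  · rintro ⟨z, -, hall⟩
    have hcount := sum_ncard_inter_fixedBy_eq (W := orbit G z) fun g hg x hx => by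
      rw [← hall x (stabilizer_ne_bot_iff.2 ⟨g, hg, hx⟩)]
      exact mem_orbit_self x
    rw [sum_ncard_orbit_inter_fixedBy] at hcount
    have hm : 0 < (orbit G z).ncard := (Set.ncard_pos (hfin z)).2 ⟨z, mem_orbit_self z⟩
    have hle := card_filter_le univ fun g : G => g ^ p = 1
    -- `|G| = |O| + (2|G| - 1 - P)` with `|O| ≥ 1` and `P ≤ |G|`
    have hP : #{g : G | g ^ p = 1} = #(univ : Finset G) := by omega
    exact fun g => card_filter_eq_iff.1 hP g (mem_univ g)
  · intro hexp
    obtain ⟨z₁, hz₁⟩ := hfix.exists_fixedBy_eq_singleton hg₀ hg₀p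
    have hz₁ : z₁ ∈ fixedBy X g₀ := hz₁ ▸ rfl
    refine ⟨z₁, stabilizer_ne_bot_iff.2 ⟨g₀, hg₀, hz₁⟩, fun w hw => ?_⟩
    by_contra hne
    have hdisj := (orbit.eq_or_disjoint w z₁).resolve_left hne
    have hcount := sum_ncard_inter_fixedBy_le (fun _ => hfix.finite_fixedBy)
      (orbit G w ∪ orbit G z₁)
    rw [sum_ncard_union_inter_fixedBy hdisj (hfin _) (hfin _), sum_ncard_orbit_inter_fixedBy,
      sum_ncard_orbit_inter_fixedBy, Set.ncard_union_eq hdisj (hfin _) (hfin _)] at hcount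
    have hP : #{g : G | g ^ p = 1} = #(univ : Finset G) :=
      card_filter_eq_iff.2 fun g _ => hexp g
    have := two_mul_ncard_orbit_le hw
    have := two_mul_ncard_orbit_le (stabilizer_ne_bot_iff.2 ⟨g₀, hg₀, hz₁⟩)
    -- `2|G| ≤ |O_w| + |O₁| + (|G| - 1)` with both orbits of size at most `|G| / 2`
    omega

end FixedPointDichotomy

theorem stmt6_general (Fq : Type*) [Field Fq] (p : ℕ) (hp : p.Prime) [CharP Fq p]
    (K : Type*) [Field K] [Algebra Fq K] [IsAlgClosure Fq K]
    (G : Subgroup (Equiv.Perm (ℙ K (Fin 2 → K)))) (hG : G ≤ pgl K) (hfin : Finite G)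
    (hdvd : p ∣ Nat.card G) :
    (∃ z₁ z₂ : ℙ K (Fin 2 → K), ∀ z : ℙ K (Fin 2 → K),
      MulAction.stabilizer G z ≠ ⊥ →
      MulAction.orbit G z = MulAction.orbit G z₁ ∨
      MulAction.orbit G z = MulAction.orbit G z₂) ∧
    ((∃ z : ℙ K (Fin 2 → K), MulAction.stabilizer G z ≠ ⊥ ∧
        ∀ w : ℙ K (Fin 2 → K), MulAction.stabilizer G w ≠ ⊥ →
          MulAction.orbit G w = MulAction.orbit G z) ↔ IsPGroup p G) := by
  classical
  have : Fact p.Prime := ⟨hp⟩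
  have : IsAlgClosed K := IsAlgClosure.isAlgClosed Fq
  have : CharP K p := charP_of_injective_algebraMap (algebraMap Fq K).injective p
  have : Fintype G := Fintype.ofFinite G
  have hfix := fixedPointDichotomy_of_le_pgl p hG
  obtain ⟨g₀, hg₀⟩ := exists_prime_orderOf_dvd_card' p hdvd
  obtain ⟨hg₀p, hg₀⟩ := orderOf_eq_prime_iff.1 hg₀
  exact ⟨hfix.exists_forall_orbit_eq_or_orbit_eq hg₀ hg₀p,
    (hfix.exists_forall_orbit_eq_iff hg₀ hg₀p).trans hfix.isPGroup_iff.symm⟩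

/-- A finite subgroup `G` of `PGL(2, ℚ̄_q)` with `p ∣ |G|` has at most two non-regular orbits
on the projective line, and exactly one non-regular orbit iff `G` is a `p`-group. -/
theorem stmt6 (Fq : Type*) [Field Fq] [Fintype Fq] (p : ℕ) (hp : p.Prime) [CharP Fq p]
    (K : Type*) [Field K] [Algebra Fq K] [IsAlgClosure Fq K]
    (G : Subgroup (Equiv.Perm (ℙ K (Fin 2 → K)))) (hG : G ≤ pgl K) (hfin : Finite G)
    (hdvd : p ∣ Nat.card G) :
    (∃ z₁ z₂ : ℙ K (Fin 2 → K), ∀ z : ℙ K (Fin 2 → K),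
      MulAction.stabilizer G z ≠ ⊥ →
      MulAction.orbit G z = MulAction.orbit G z₁ ∨
      MulAction.orbit G z = MulAction.orbit G z₂) ∧
    ((∃ z : ℙ K (Fin 2 → K), MulAction.stabilizer G z ≠ ⊥ ∧
        ∀ w : ℙ K (Fin 2 → K), MulAction.stabilizer G w ≠ ⊥ →
          MulAction.orbit G w = MulAction.orbit G z) ↔ IsPGroup p G) :=
  stmt6_general Fq p hp K G hG hfin hdvd

end PaperPGL
end

section
/- Let G, H be subgroups of Sym(Ω) for a finite set Ω, with G acting transitively and regularly, and with the actions of G and H commuting pointwise. Then G transitively permutes the H-orbits on Ω, and the stabilizer in G of any given H-orbit is isomorphic to H. -/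
/-!
Because `G` commutes with `H`, `g • orbit H a = orbit H (g • a)`, so transitivity of `G` on points
gives transitivity on `H`-orbits. Because `G` is regular, each `h ∈ H` determines a unique `g ∈ G`
with `g • a = h⁻¹ • a`. This is a homomorphism `H →* G`; it is injective since `H`, commuting with
a transitive group, acts freely, and its image is the stabilizer of `orbit H a`, which consists of
the `g` with `g • a ∈ orbit H a`.
-/

open Matrix Polynomial
open scoped LinearAlgebra.Projectivization MatrixGroups Pointwise

namespace PaperPGL

section CommutingActions

open MulAction

theorem eq_of_smul_eq_smul_of_smulCommClass (G : Type*) {H α : Type*} [Group G] [Group H]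
    [MulAction G α] [MulAction H α] [SMulCommClass G H α] [IsPretransitive G α]
    [FaithfulSMul H α] {h h' : H} {a : α} (ha : h • a = h' • a) : h = h' := by
  refine eq_of_smul_eq_smul (α := α) fun b => ?_
  obtain ⟨g, rfl⟩ := exists_smul_eq G a b
  rw [← smul_comm g h a, ← smul_comm g h' a, ha]

variable {G H α : Type*} [Group G] [Group H] [MulAction G α] [MulAction H α]
  [SMulCommClass G H α]

theorem smul_orbit_eq_orbit_smul_of_smulCommClass (g : G) (a : α) :
    g • orbit H a = orbit H (g • a) := by
  ext x
  simp only [Set.mem_smul_set, mem_orbit_iff]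
  constructor
  · rintro ⟨_, ⟨h, rfl⟩, rfl⟩
    exact ⟨h, (smul_comm g h a).symm⟩
  · rintro ⟨h, rfl⟩
    exact ⟨h • a, ⟨h, rfl⟩, smul_comm g h a⟩

theorem eq_of_smul_eq_smul_of_free (hfree : ∀ (g : G) (b : α), g • b = b → g = 1)
    {g g' : G} {a : α} (h : g • a = g' • a) : g = g' := by
  have : (g'⁻¹ * g) • a = a := by rw [mul_smul, h, inv_smul_smul]
  exact (inv_mul_eq_one.mp (hfree _ a this)).symm

variable [IsPretransitive G α]

theorem exists_smul_orbit_eq (a b : α) : ∃ g : G, g • orbit H a = orbit H b := by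
  obtain ⟨g, rfl⟩ := exists_smul_eq G a b
  exact ⟨g, smul_orbit_eq_orbit_smul_of_smulCommClass g a⟩

variable (hfree : ∀ (g : G) (b : α), g • b = b → g = 1) (a : α)

/-- `h` goes to the unique `g` with `g • a = h⁻¹ • a`; without the inverse this would be an
anti-homomorphism. -/
noncomputable def regularHom : H →* G where
  toFun h := (exists_smul_eq G a (h⁻¹ • a)).choose
  map_one' := eq_of_smul_eq_smul_of_free hfree (a := a) <| by
    rw [(exists_smul_eq G a _).choose_spec, inv_one, one_smul, one_smul]
  map_mul' h₁ h₂ := eq_of_smul_eq_smul_of_free hfree (a := a) <| by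
    rw [(exists_smul_eq G a _).choose_spec, mul_smul, (exists_smul_eq G a _).choose_spec,
      smul_comm, (exists_smul_eq G a _).choose_spec, _root_.mul_inv_rev, mul_smul]

theorem regularHom_smul (h : H) : regularHom hfree a h • a = h⁻¹ • a :=
  (exists_smul_eq G a _).choose_spec

theorem regularHom_injective [FaithfulSMul H α] :
    Function.Injective (regularHom hfree a : H →* G) :=
  fun h h' hh => inv_injective <| eq_of_smul_eq_smul_of_smulCommClass G (a := a) <| by
    rw [← regularHom_smul hfree a, hh, regularHom_smul]

theorem regularHom_range : (regularHom hfree a : H →* G).range = stabilizer G (orbit H a) := by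
  ext g
  rw [MonoidHom.mem_range, mem_stabilizer_iff, smul_orbit_eq_orbit_smul_of_smulCommClass,
    orbit_eq_iff, mem_orbit_iff]
  constructor
  · rintro ⟨h, rfl⟩
    exact ⟨h⁻¹, (regularHom_smul hfree a h).symm⟩
  · rintro ⟨h, hh⟩
    exact ⟨h⁻¹, eq_of_smul_eq_smul_of_free hfree (a := a) (by rw [regularHom_smul, inv_inv, hh])⟩

noncomputable def stabilizerOrbitMulEquiv [FaithfulSMul H α] :
    stabilizer G (orbit H a) ≃* H :=
  (MulEquiv.subgroupCongr (regularHom_range hfree a).symm).trans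
    (MonoidHom.ofInjective (regularHom_injective hfree a)).symm

end CommutingActions

theorem stmt12_general {Ω : Type*} (G H : Subgroup (Equiv.Perm Ω))
    (hGtrans : ∀ a b : Ω, ∃ g ∈ G, g a = b)
    (hGfree : ∀ g ∈ G, ∀ a : Ω, g a = a → g = 1)
    (hcomm : ∀ g ∈ G, ∀ h ∈ H, ∀ a : Ω, g (h a) = h (g a)) :
    (∀ a b : Ω, ∃ g : G, g • (MulAction.orbit H a) = MulAction.orbit H b) ∧
    (∀ a : Ω, Nonempty ((MulAction.stabilizer G (MulAction.orbit H a)) ≃* H)) := by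
  have : SMulCommClass G H Ω := ⟨fun g h => hcomm g g.2 h h.2⟩
  have : MulAction.IsPretransitive G Ω :=
    ⟨fun a b => (hGtrans a b).elim fun g ⟨hg, hgab⟩ => ⟨⟨g, hg⟩, hgab⟩⟩
  have hfree (g : G) (a : Ω) (hg : g • a = a) : g = 1 := Subtype.ext (hGfree g g.2 a hg)
  exact ⟨exists_smul_orbit_eq, fun a => ⟨stabilizerOrbitMulEquiv hfree a⟩⟩

/-- If `G`, `H` are subgroups of `Sym(Ω)`, `Ω` finite, with `G` transitive and regular and the
actions commuting pointwise, then `G` transitively permutes the `H`-orbits, and the stabilizer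
in `G` of any `H`-orbit is isomorphic to `H`. -/
theorem stmt12 {Ω : Type*} [Finite Ω] (G H : Subgroup (Equiv.Perm Ω))
    (hGtrans : ∀ a b : Ω, ∃ g ∈ G, g a = b)
    (hGfree : ∀ g ∈ G, ∀ a : Ω, g a = a → g = 1)
    (hcomm : ∀ g ∈ G, ∀ h ∈ H, ∀ a : Ω, g (h a) = h (g a)) :
    (∀ a b : Ω, ∃ g : G, g • (MulAction.orbit H a) = MulAction.orbit H b) ∧
    (∀ a : Ω, Nonempty ((MulAction.stabilizer G (MulAction.orbit H a)) ≃* H)) :=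
  stmt12_general G H hGtrans hGfree hcomm

end PaperPGL
end
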